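/- arXiv:1711.07029 — 5 statements merged into one kernel-verified Lean document; each statement's English description precedes it below -/
import Mathlib

section
/- For all integers k ≥ 1 and n ≥ 1, there exists a universal cycle for the set of monotone k-letter words over the linearly ordered alphabet Fin n, where a word w : Fin k → Fin n is called monotone if it has a cyclic rotation that is non-decreasing, i.e., there exists r such that the word i ↦ w((i + r) mod k) is monotone non-decreasing. -/
/- The finite set of words of length `k` over a finite alphabet `A`
satisfying a predicate `P`. -/
open Classical in
noncomputable def wordsOf {A : Type*} [Fintype A] {k : ℕ} (P : (Fin k → A) → Prop) :
    Finset (Fin k → A) :=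
  Finset.univ.filter P

/-- A nonempty finite set `S` of words of length `k` over `A` admits a universal cycle:
a function `c : ZMod S.card → A` such that `i ↦ (fun j => c (i + j))` is a bijection
from `ZMod S.card` onto `S`. -/
def HasUCycle {A : Type*} {k : ℕ} (S : Finset (Fin k → A)) : Prop :=
  ∃ c : ZMod S.card → A,
    Set.BijOn (fun i : ZMod S.card => fun j : Fin k => c (i + (j.val : ZMod S.card)))
      Set.univ ↑S

/-! Read a word `w` of a set `S` as an edge from its prefix `Fin.init w` to its suffix
`Fin.tail w`: a U-cycle for `S` is an Eulerian circuit of this multigraph. If `S` is closed under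
rotation, rotation maps the edges entering a vertex bijectively onto those leaving it, so the graph
is balanced and has an Eulerian circuit once it is connected. Euler's theorem is proved through
permutations `σ` of the edges sending each edge to one leaving its target: one with a largest cycle
through a fixed edge is a single cycle, for otherwise exchanging the successors of two edges with the
same target, lying on different cycles, merges these cycles.

For cyclically monotone words, connectivity comes from the constant word `⊥`: a non-decreasing word
`v₀ ≤ ⋯ ≤ v_K` with `v_K ≠ ⊥` is reached from the non-decreasing word `⊥ v₀ ⋯ v_{K-1}`, which has
fewer letters different from `⊥`, by changing its first letter and rotating. -/

open Equiv Relation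

namespace Equiv.Perm

variable {α : Type*} [Finite α]

theorem sameCycle_of_apply_eq {σ τ : Perm α} {a : α}
    (h : ∀ y, σ.SameCycle y a → y ≠ a → τ y = σ y) {y : α} (hy : σ.SameCycle y a) :
    τ.SameCycle y a := by
  obtain ⟨n, hn⟩ := hy.exists_nat_pow_eq
  induction n generalizing y with
  | zero => exact hn ▸ SameCycle.rfl
  | succ n ih =>
    rcases eq_or_ne y a with rfl | hya
    · exact SameCycle.rfl
    · rw [pow_succ, mul_apply] at hn
      have hσy := ih (sameCycle_apply_left.2 hy) hn
      rw [← h y hy hya] at hσy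
      exact sameCycle_apply_left.1 hσy

variable [DecidableEq α] {σ : Perm α} {a b : α}

theorem SameCycle.mul_swap {y : α} (hab : ¬σ.SameCycle a b) (hy : σ.SameCycle y a) :
    (σ * swap a b).SameCycle y a :=
  sameCycle_of_apply_eq (fun z hz hza => by
    rw [mul_apply, swap_apply_of_ne_of_ne hza fun hzb => hab (hzb ▸ hz).symm]) hy

theorem sameCycle_mul_swap (hab : ¬σ.SameCycle a b) : (σ * swap a b).SameCycle a b := by
  have hb : (σ * swap b a).SameCycle (σ b) b :=
    SameCycle.mul_swap (fun h => hab h.symm) (sameCycle_apply_left.2 SameCycle.rfl)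
  rw [swap_comm] at hb
  exact sameCycle_apply_left.1 (by simpa using hb)

theorem setOf_sameCycle_ssubset_mul_swap {x : α} (ha : σ.SameCycle x a) (hb : ¬σ.SameCycle x b) :
    {y | σ.SameCycle x y} ⊂ {y | (σ * swap a b).SameCycle x y} := by
  have hab : ¬σ.SameCycle a b := fun h => hb (ha.trans h)
  have hxa : (σ * swap a b).SameCycle x a := ha.mul_swap hab
  refine (Set.ssubset_iff_of_subset fun y hy => ?_).2 ⟨b, hxa.trans (sameCycle_mul_swap hab), hb⟩
  exact hxa.trans ((hy.symm.trans ha).mul_swap hab).symm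

end Equiv.Perm

open Perm

-- Euler's theorem for the multigraph with edge set `α`, edge `a` running from `s a` to `t a`;
-- `ρ` witnesses that the graph is balanced.
theorem exists_sameCycle_of_connected {α β : Type*} [Finite α] (s t : α → β) (ρ : Perm α)
    (hρ : ∀ a, t a = s (ρ a)) (a₀ : α)
    (hconn : ∀ a, ReflTransGen (fun a b => t a = s b ∨ t a = t b) a₀ a) :
    ∃ σ : Perm α, (∀ a, t a = s (σ a)) ∧ ∀ a, σ.SameCycle a₀ a := by
  classical
  obtain ⟨σ, hσ, hmax⟩ := Set.Finite.exists_maximalFor (fun σ : Perm α => {a | σ.SameCycle a₀ a})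
    {σ | ∀ a, t a = s (σ a)} (Set.toFinite _) ⟨ρ, hρ⟩
  have sibling : ∀ a b, σ.SameCycle a₀ a → t a = t b → σ.SameCycle a₀ b := by
    intro a b ha hab
    by_contra hb
    have hσ' : ∀ c, t c = s ((σ * swap a b) c) := fun c => by
      rw [mul_apply, ← hσ, apply_swap_eq_self hab]
    have hlt := setOf_sameCycle_ssubset_mul_swap ha hb
    exact hlt.not_subset (hmax hσ' hlt.subset)
  refine ⟨σ, hσ, fun a => ?_⟩
  induction hconn a with
  | refl => exact SameCycle.rfl
  | @tail a b _ hab ih =>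
    rcases hab with hnext | hsib
    · have hprev : t a = t (σ.symm b) := by rw [hnext, hσ, apply_symm_apply]
      simpa using sameCycle_apply_right.2 (sibling _ _ ih hprev)
    · exact sibling _ _ ih hsib

section Words

variable {A : Type*} {K : ℕ}

def rotate : Perm (Fin (K + 1) → A) where
  toFun w i := w (i + 1)
  invFun w i := w (i - 1)
  left_inv w := by simp
  right_inv w := by simp

theorem tail_eq_init_rotate (w : Fin (K + 1) → A) : Fin.tail w = Fin.init (rotate w) := by
  funext i
  simp [rotate, Fin.tail, Fin.init, Fin.coeSucc_eq_succ]

def Linked (u v : Fin (K + 1) → A) : Prop := Fin.tail u = Fin.init v ∨ Fin.tail u = Fin.tail v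

theorem hasUCycle_of_bijOn {S : Finset (Fin (K + 1) → A)} (f : ZMod S.card → Fin (K + 1) → A)
    (hf : Set.BijOn f Set.univ S) (hnext : ∀ i, Fin.tail (f i) = Fin.init (f (i + 1))) :
    HasUCycle S := by
  have window : ∀ j : Fin (K + 1), ∀ i, f (i + j.val) 0 = f i j := by
    intro j
    induction j using Fin.induction with
    | zero => simp
    | succ j ih =>
      intro i
      have hj : i + (j.succ.val : ZMod S.card) = i + 1 + j.castSucc.val := by
        rw [Fin.val_succ, Fin.val_castSucc]; push_cast; ring
      rw [hj, ih]
      exact (congrFun (hnext i) j).symm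
  exact ⟨fun i => f i 0, by simpa only [window] using hf⟩

theorem hasUCycle_of_sameCycle {S : Finset (Fin (K + 1) → A)} (σ : Perm S)
    (hσ : ∀ w, Fin.tail w.1 = Fin.init (σ w).1) (w₀ : S) (hcyc : ∀ w, σ.SameCycle w₀ w) :
    HasUCycle S := by
  have : NeZero S.card := ⟨Finset.card_ne_zero_of_mem w₀.2⟩
  have hσS : σ.IsCycleOn (Finset.univ : Finset S) :=
    ⟨by simpa using σ.bijective, fun x _ y _ => (hcyc x).symm.trans (hcyc y)⟩
  have pow_eq_iff (a b : ℕ) : (σ ^ a) w₀ = (σ ^ b) w₀ ↔ (a : ZMod S.card) = b := by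
    rw [hσS.pow_apply_eq_pow_apply (Finset.mem_univ _), Finset.card_univ, Fintype.card_coe,
      ZMod.natCast_eq_natCast_iff]
  refine hasUCycle_of_bijOn (fun i => ((σ ^ i.val) w₀).1)
    ⟨fun i _ => ((σ ^ i.val) w₀).2, fun i _ j _ hij => ?_, fun w hw => ?_⟩ fun i => ?_
  · simpa using (pow_eq_iff _ _).1 (Subtype.ext hij)
  · obtain ⟨m, hm⟩ := (hcyc ⟨w, hw⟩).exists_nat_pow_eq
    refine ⟨m, trivial, ?_⟩
    show ((σ ^ (m : ZMod S.card).val) w₀).1 = w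
    rw [(pow_eq_iff _ m).2 (ZMod.natCast_zmod_val _), hm]
  · rw [(pow_eq_iff (i + 1).val (i.val + 1)).2 (by simp), pow_succ', mul_apply, hσ]

theorem hasUCycle_of_connected (S : Finset (Fin (K + 1) → A)) (hrot : ∀ w, rotate w ∈ S ↔ w ∈ S)
    (w₀ : S) (hconn : ∀ w : S, ReflTransGen (fun u v : S => Linked u.1 v.1) w₀ w) :
    HasUCycle S := by
  obtain ⟨σ, hσ, hcyc⟩ := exists_sameCycle_of_connected (fun w : S => Fin.init w.1)
    (fun w => Fin.tail w.1) (rotate.subtypePerm hrot) (fun w => tail_eq_init_rotate w.1) w₀ hconn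
  exact hasUCycle_of_sameCycle σ hσ w₀ hcyc

end Words

section NonBotCount

variable {A : Type*} [LinearOrder A] [OrderBot A]

def nonBotCount {m : ℕ} (w : Fin m → A) : ℕ := ∑ i, if w i = ⊥ then 0 else 1

theorem nonBotCount_cons_bot {m : ℕ} (f : Fin m → A) :
    nonBotCount (Fin.cons ⊥ f : Fin (m + 1) → A) = nonBotCount f := by
  simp [nonBotCount, Fin.sum_univ_succ]

theorem nonBotCount_eq_init_add_one {m : ℕ} {w : Fin (m + 1) → A} (h : w (Fin.last m) ≠ ⊥) :
    nonBotCount w = nonBotCount (Fin.init w) + 1 := by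
  rw [nonBotCount, Fin.sum_univ_castSucc, if_neg h]
  rfl

theorem nonBotCount_comp_add_right {m : ℕ} [NeZero m] (w : Fin m → A) (s : Fin m) :
    nonBotCount (fun i => w (i + s)) = nonBotCount w :=
  Equiv.sum_comp (Equiv.addRight s) fun i => if w i = ⊥ then 0 else 1

end NonBotCount

theorem mem_wordsOf {A : Type*} [Fintype A] {k : ℕ} {P : (Fin k → A) → Prop} {w : Fin k → A} :
    w ∈ wordsOf P ↔ P w := by
  simp [wordsOf]

section CyclicMonotone

variable {A : Type*} [LinearOrder A] {K : ℕ}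

def IsCyclicMonotone (w : Fin (K + 1) → A) : Prop := ∃ r, Monotone fun i => w (i + r)

theorem isCyclicMonotone_comp_add_right {w : Fin (K + 1) → A} (s : Fin (K + 1)) :
    IsCyclicMonotone (fun i => w (i + s)) ↔ IsCyclicMonotone w := by
  constructor
  · rintro ⟨r, hr⟩
    exact ⟨r + s, by simpa only [add_assoc] using hr⟩
  · rintro ⟨r, hr⟩
    exact ⟨r - s, by simpa only [add_assoc, sub_add_cancel] using hr⟩

theorem isCyclicMonotone_iff_exists_nat (w : Fin (K + 1) → A) :
    IsCyclicMonotone w ↔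
      ∃ r : ℕ, Monotone fun i : Fin (K + 1) => w ⟨(i.val + r) % (K + 1), Nat.mod_lt _ K.succ_pos⟩ := by
  constructor
  · rintro ⟨r, hr⟩
    exact ⟨r.val, by simpa only [Fin.add_def] using hr⟩
  · rintro ⟨r, hr⟩
    refine ⟨⟨r % (K + 1), Nat.mod_lt _ K.succ_pos⟩, ?_⟩
    simpa only [Fin.add_def, Nat.add_mod_mod] using hr

variable [Fintype A]

variable (A K) in
noncomputable def cyclicMonotoneWords : Finset (Fin (K + 1) → A) := wordsOf IsCyclicMonotone

theorem mem_cyclicMonotoneWords {w : Fin (K + 1) → A} :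
    w ∈ cyclicMonotoneWords A K ↔ IsCyclicMonotone w :=
  mem_wordsOf

theorem reflTransGen_linked_comp_add_right (w : cyclicMonotoneWords A K) (s : Fin (K + 1)) :
    ReflTransGen (fun u v : cyclicMonotoneWords A K => Linked u.1 v.1) w
      ⟨fun i => w.1 (i + s), mem_cyclicMonotoneWords.2
        ((isCyclicMonotone_comp_add_right s).2 (mem_cyclicMonotoneWords.1 w.2))⟩ := by
  induction s using Fin.induction with
  | zero => simpa using ReflTransGen.refl
  | succ j ih =>
    refine ih.tail (Or.inl (funext fun p => ?_))
    simp only [Fin.tail, Fin.init, ← Fin.coeSucc_eq_succ]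
    exact congrArg w.1 ((add_right_comm _ _ _).trans (add_assoc _ _ _))

variable [OrderBot A]

theorem reflTransGen_linked_of_isCyclicMonotone (w : Fin (K + 1) → A) (hw : IsCyclicMonotone w) :
    ReflTransGen (fun u v : cyclicMonotoneWords A K => Linked u.1 v.1)
      ⟨fun _ => ⊥, mem_cyclicMonotoneWords.2 ⟨0, monotone_const⟩⟩
      ⟨w, mem_cyclicMonotoneWords.2 hw⟩ := by
  obtain ⟨r, hr⟩ := hw
  by_cases hlast : w (Fin.last K + r) = ⊥
  · have hbot : w = fun _ => ⊥ := funext fun i => le_bot_iff.1 <| by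
      simpa [hlast] using hr (Fin.le_last (i - r))
    subst hbot
    rfl
  set v : Fin (K + 1) → A := fun i => w (i + r)
  set u : Fin (K + 1) → A := fun i => w (i + (r - 1))
  have htail : Fin.tail u = Fin.init v := funext fun j => by
    simp only [u, v, Fin.tail, Fin.init, ← Fin.coeSucc_eq_succ]
    congr 1
    abel
  set u' : Fin (K + 1) → A := Fin.cons ⊥ (Fin.init v)
  have hu' : Monotone u' := monotone_iff_forall_lt.2 <| (Fin.liftFun_cons _).2
    ⟨fun _ => bot_le, monotone_iff_forall_lt.1 (hr.comp Fin.strictMono_castSucc.monotone)⟩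
  have hcount : nonBotCount u' < nonBotCount w := by
    rw [← nonBotCount_comp_add_right w r, nonBotCount_cons_bot,
      nonBotCount_eq_init_add_one (w := v) hlast]
    exact Nat.lt_succ_self _
  have hu := (isCyclicMonotone_comp_add_right (r - 1)).2 ⟨r, hr⟩
  have hu'u : Linked u' u := Or.inr (by rw [Fin.tail_cons, htail])
  have hpath := ((reflTransGen_linked_of_isCyclicMonotone u' ⟨0, by simpa using hu'⟩).tail
    (c := ⟨u, mem_cyclicMonotoneWords.2 hu⟩) hu'u).trans
    (reflTransGen_linked_comp_add_right ⟨u, mem_cyclicMonotoneWords.2 hu⟩ (1 - r))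
  convert hpath using 3
  simp only [u]
  congr 1
  abel
termination_by nonBotCount w

variable (A K) in
theorem hasUCycle_cyclicMonotoneWords : HasUCycle (cyclicMonotoneWords A K) :=
  hasUCycle_of_connected _
    (fun _ => mem_cyclicMonotoneWords.trans
      ((isCyclicMonotone_comp_add_right 1).trans mem_cyclicMonotoneWords.symm))
    ⟨fun _ => ⊥, mem_cyclicMonotoneWords.2 ⟨0, monotone_const⟩⟩
    fun w => reflTransGen_linked_of_isCyclicMonotone w.1 (mem_cyclicMonotoneWords.1 w.2)

end CyclicMonotone

/-- U-cycles of `k`-letter monotone words over `Fin n` exist for all `k, n ≥ 1`,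
where a word is monotone if some cyclic rotation of it is non-decreasing. -/
theorem ucycle_monotone_words (k n : ℕ) (hk : 1 ≤ k) (hn : 1 ≤ n) :
    HasUCycle (wordsOf (fun w : Fin k → Fin n =>
      ∃ r : ℕ, Monotone fun i : Fin k => w ⟨(i.val + r) % k, Nat.mod_lt _ (by omega)⟩)) := by
  obtain ⟨K, rfl⟩ := Nat.exists_eq_add_of_le' hk
  obtain ⟨N, rfl⟩ := Nat.exists_eq_add_of_le' hn
  have hP : (fun w : Fin (K + 1) → Fin (N + 1) => ∃ r : ℕ, Monotone fun i : Fin (K + 1) =>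
      w ⟨(i.val + r) % (K + 1), Nat.mod_lt _ K.succ_pos⟩) = IsCyclicMonotone :=
    funext fun w => propext (isCyclicMonotone_iff_exists_nat w).symm
  rw [hP]
  exact hasUCycle_cyclicMonotoneWords (Fin (N + 1)) K
end

section
/- For all integers k ≥ 1, n ≥ 1 and c ≥ 1, there exists a universal cycle for the set of k-letter Lipschitz words with constant c over the cyclic alphabet ZMod n, where a word w : Fin k → ZMod n is Lipschitz with constant c if for every i with 0 ≤ i < k−1 the cyclic distance between w(i+1) and w(i) is at most c. -/
/-! Words of length `k + 1` whose consecutive letters are related by `r` are the edges of a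
directed multigraph on words of length `k`, each edge running from its first `k` letters to its
last `k`; a universal cycle is an Eulerian circuit of this graph, read off through the first
letters of its edges. When every letter has the same in- and out-degree for `r`, the graph is
balanced, and when `r` is strongly connected so is the graph. For Lipschitz words `r` is
translation invariant, hence regular, and steps of `+1` connect any two letters.

Euler's theorem is proved on successor permutations `σ` of the edges (each edge ends where its
image under `σ` begins): one with the most pairs of edges on a common cycle is a single cycle,
since otherwise exchanging the successors of two edges with a common end on different cycles
merges those cycles. -/

open Equiv Equiv.Perm Relation

namespace List

variable {α : Type*}

theorem ofFn_tail {k : ℕ} (f : Fin (k + 1) → α) :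
    ofFn (Fin.tail f) = (ofFn f).tail := by
  rw [ofFn_succ]
  rfl

theorem getLast?_ofFn {k : ℕ} (f : Fin (k + 1) → α) :
    (ofFn f).getLast? = some (f (Fin.last k)) := by
  rw [ofFn_succ']
  simp

theorem ofFn_snoc {k : ℕ} (f : Fin k → α) (b : α) :
    ofFn (Fin.snoc f b : Fin (k + 1) → α) = ofFn f ++ [b] := by
  rw [ofFn_succ']
  simp

end List

namespace Equiv.Perm

variable {α : Type*} [DecidableEq α] {f : Perm α} {x y : α}

theorem mul_swap_pow_apply_of_forall_ne {w : α} {i : ℕ}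
    (h : ∀ j < i, (f ^ j) w ≠ x ∧ (f ^ j) w ≠ y) : ((f * swap x y) ^ i) w = (f ^ i) w := by
  induction i with
  | zero => rfl
  | succ i ih =>
    obtain ⟨hx, hy⟩ := h i i.lt_succ_self
    rw [pow_succ', mul_apply, ih fun j hj => h j (by omega), mul_apply,
      swap_apply_of_ne_of_ne hx hy, ← mul_apply, ← pow_succ']

theorem sameCycle_mul_swap_s1 [Finite α] (hxy : ¬f.SameCycle x y) :
    (f * swap x y).SameCycle x y := by
  classical
  -- `f * swap x y` maps `x` to `f y` and then agrees with `f` until the `f`-orbit of `f y`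
  -- first returns to `y`, which it does without meeting `x`.
  have hret : ∃ i : ℕ, (f ^ i) (f y) = y :=
    (sameCycle_apply_left.mpr (SameCycle.refl f y)).exists_nat_pow_eq
  have hpow : ((f * swap x y) ^ Nat.find hret) (f y) = y := by
    rw [mul_swap_pow_apply_of_forall_ne, Nat.find_spec hret]
    intro j hj
    refine ⟨fun hx => hxy ?_, Nat.find_min hret hj⟩
    rw [← hx]
    exact (sameCycle_pow_right.mpr (sameCycle_apply_right.mpr (SameCycle.refl f y))).symm
  have hx : (f * swap x y) x = f y := by rw [mul_apply, swap_apply_left]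
  have hfy : (f * swap x y).SameCycle x (f y) :=
    hx ▸ sameCycle_apply_right.mpr (SameCycle.refl _ x)
  rwa [← sameCycle_pow_right (n := Nat.find hret), hpow] at hfy

theorem SameCycle.mul_swap_s1 [Finite α] (hxy : ¬f.SameCycle x y) {a b : α}
    (h : f.SameCycle a b) : (f * swap x y).SameCycle a b := by
  have hswap : ∀ u, (f * swap x y).SameCycle u (swap x y u) := by
    intro u
    rw [swap_apply_def]
    split_ifs with hux huy
    · rw [hux]; exact sameCycle_mul_swap_s1 hxy
    · rw [huy]; exact (sameCycle_mul_swap_s1 hxy).symm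
    · rfl
  have hstep : ∀ u, (f * swap x y).SameCycle u (f u) := fun u => by
    simpa only [mul_apply, swap_apply_self] using sameCycle_apply_right.mpr (hswap u)
  obtain ⟨i, rfl⟩ := h.exists_nat_pow_eq
  clear h
  induction i with
  | zero => rfl
  | succ i ih => exact ih.trans (by rw [pow_succ', mul_apply]; exact hstep _)

theorem exists_zmod_equiv_of_forall_sameCycle {α : Type*} [Finite α] [Nonempty α] {σ : Perm α}
    (h : ∀ a b, σ.SameCycle a b) {m : ℕ} (hm : Nat.card α = m) :
    ∃ e : ZMod m ≃ α, ∀ i, e (i + 1) = σ (e i) := by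
  let a₀ : α := Classical.arbitrary α
  have horbit : ∀ b, b ∈ MulAction.orbit (Subgroup.zpowers σ) a₀ := fun b => by
    obtain ⟨i, hi⟩ := h a₀ b
    exact ⟨⟨σ ^ i, Subgroup.zpow_mem_zpowers σ i⟩, hi⟩
  let e₀ := (MulAction.orbitZPowersEquiv σ a₀).symm.trans (Equiv.subtypeUnivEquiv horbit)
  have he₀ : ∀ z : ℤ, e₀ z = (σ ^ z) a₀ := fun z => by
    simp only [e₀, Equiv.trans_apply, subtypeUnivEquiv_apply,
      MulAction.orbitZPowersEquiv_symm_apply']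
    rfl
  have hp : Function.minimalPeriod (σ • ·) a₀ = m := by
    rw [← hm, ← Nat.card_congr e₀, Nat.card_zmod]
  refine ⟨(ZMod.ringEquivCongr hp).symm.toEquiv.trans e₀, fun i => ?_⟩
  obtain ⟨z, hz⟩ := ZMod.intCast_surjective ((ZMod.ringEquivCongr hp).symm i)
  simp only [Equiv.trans_apply, RingEquiv.toEquiv_eq_coe, RingEquiv.coe_toEquiv, map_add,
    map_one, ← hz]
  rw [← Int.cast_one, ← Int.cast_add, he₀, he₀, add_comm, zpow_add, zpow_one, mul_apply]

end Equiv.Perm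

section Eulerian

variable {E V : Type*} (src tgt : E → V)

def HasEdge (a b : V) : Prop := ∃ e, src e = a ∧ tgt e = b

/-- An Eulerian circuit, encoded by its successor permutation of the edges: a single cycle
along which every edge ends where the next one starts. -/
def IsEulerianCircuit (σ : Perm E) : Prop :=
  (∀ e, tgt e = src (σ e)) ∧ ∀ a b, σ.SameCycle a b

variable {src tgt}

theorem exists_perm_tgt_eq_src [Finite E]
    (hbal : ∀ v, Nat.card {e // tgt e = v} = Nat.card {e // src e = v}) :
    ∃ σ : Perm E, ∀ e, tgt e = src (σ e) := by
  classical
  have := Fintype.ofFinite E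
  have hfib : ∀ v, Nonempty ({e // tgt e = v} ≃ {e // src e = v}) := fun v => by
    simpa only [Nat.card_eq_fintype_card, Fintype.card_eq] using hbal v
  let σ := (sigmaFiberEquiv tgt).symm.trans
    ((sigmaCongrRight fun v => (hfib v).some).trans (sigmaFiberEquiv src))
  exact ⟨σ, fun e => ((hfib (tgt e)).some ⟨e, rfl⟩).2.symm⟩

theorem forall_sameCycle_of_reflTransGen {σ : Perm E} (hσ : ∀ e, tgt e = src (σ e))
    (htgt : ∀ x y, tgt x = tgt y → σ.SameCycle x y)
    (hconn : ∀ e e', ReflTransGen (HasEdge src tgt) (tgt e) (src e')) (a b : E) :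
    σ.SameCycle a b := by
  have hsrc : ∀ e, tgt (σ.symm e) = src e := fun e => by simpa using hσ (σ.symm e)
  have hreach : ∀ v, ReflTransGen (HasEdge src tgt) (tgt a) v →
      ∀ g, tgt g = v → σ.SameCycle a g := by
    intro v hv
    induction hv with
    | refl => exact fun g hg => htgt a g hg.symm
    | tail _ hvw ih =>
      obtain ⟨e, rfl, rfl⟩ := hvw
      exact fun g hg => (sameCycle_symm_apply_right.mp (ih _ (hsrc e))).trans (htgt e g hg.symm)
  exact sameCycle_symm_apply_right.mp (hreach _ (hconn a b) _ (hsrc b))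

theorem exists_isEulerianCircuit [Finite E]
    (hbal : ∀ v, Nat.card {e // tgt e = v} = Nat.card {e // src e = v})
    (hconn : ∀ e e', ReflTransGen (HasEdge src tgt) (tgt e) (src e')) :
    ∃ σ, IsEulerianCircuit src tgt σ := by
  classical
  obtain ⟨σ₀, hσ₀⟩ := exists_perm_tgt_eq_src hbal
  have : Nonempty {σ : Perm E // ∀ e, tgt e = src (σ e)} := ⟨⟨σ₀, hσ₀⟩⟩
  obtain ⟨⟨σ, hσ⟩, hmax⟩ :=
    Finite.exists_max fun τ : {σ : Perm E // ∀ e, tgt e = src (σ e)} =>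
      {p : E × E | τ.1.SameCycle p.1 p.2}.ncard
  refine ⟨σ, hσ, forall_sameCycle_of_reflTransGen hσ (fun x y hxy => ?_) hconn⟩
  by_contra hne
  have htgt_swap : ∀ e, tgt (swap x y e) = tgt e := fun e => by
    rw [swap_apply_def]
    split_ifs <;> simp_all
  have hlt : {p : E × E | σ.SameCycle p.1 p.2}.ncard
      < {p : E × E | (σ * swap x y).SameCycle p.1 p.2}.ncard :=
    Set.ncard_lt_ncard ⟨fun p hp => hp.mul_swap_s1 hne, fun hsub => hne <|
      hsub (show (x, y) ∈ {p : E × E | (σ * swap x y).SameCycle p.1 p.2} from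
        sameCycle_mul_swap_s1 hne)⟩
  exact (hmax ⟨σ * swap x y, fun e => by rw [mul_apply, ← hσ, htgt_swap]⟩).not_gt hlt

end Eulerian

theorem HasUCycle.of_isEulerianCircuit {A : Type*} {k : ℕ} {S : Finset (Fin (k + 1) → A)}
    (hS : S.Nonempty) {σ : Perm S}
    (hσ : IsEulerianCircuit (fun w : S => Fin.init w.1) (fun w : S => Fin.tail w.1) σ) :
    HasUCycle S := by
  have : Nonempty S := hS.to_subtype
  obtain ⟨f, hf⟩ := exists_zmod_equiv_of_forall_sameCycle hσ.2 (Nat.card_eq_finsetCard S)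
  have hlink : ∀ i (j : Fin k), (f (i + 1)).1 j.castSucc = (f i).1 j.succ := fun i j => by
    rw [hf]
    exact (congrFun (hσ.1 (f i)) j).symm
  have hwindow : ∀ (j : ℕ) (hj : j < k + 1) i, (f (i + j)).1 0 = (f i).1 ⟨j, hj⟩ := by
    intro j
    induction j with
    | zero => intro _ i; simp
    | succ j ih =>
      intro hj i
      rw [Nat.cast_succ, add_comm (j : ZMod S.card), ← add_assoc, ih (by omega)]
      exact hlink i ⟨j, by omega⟩
  refine ⟨fun i => (f i).1 0, ?_⟩
  have hword : ∀ i, (fun j : Fin (k + 1) => (f (i + (j.val : ZMod S.card))).1 0) = (f i).1 :=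
    fun i => funext fun j => hwindow j j.2 i
  beta_reduce
  rw [funext hword]
  exact ⟨fun i _ => (f i).2, fun i _ i' _ h => f.injective (Subtype.ext h),
    fun w hw => ⟨f.symm ⟨w, hw⟩, trivial, by simp⟩⟩

section Walks

variable {A : Type*} [Fintype A] (r : A → A → Prop)

noncomputable abbrev walkWords (k : ℕ) : Finset (Fin k → A) :=
  wordsOf fun w : Fin k → A => (List.ofFn w).IsChain r

variable {r} {k : ℕ}

theorem mem_walkWords {w : Fin k → A} : w ∈ walkWords r k ↔ (List.ofFn w).IsChain r := by
  simp [wordsOf]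

theorem natCard_tail_eq (v : Fin k → A) :
    Nat.card {w : walkWords r (k + 1) // Fin.tail w.1 = v}
      = Nat.card {a // (a :: List.ofFn v).IsChain r} :=
  Nat.card_congr
    { toFun := fun w => ⟨w.1.1 0, by
        have := mem_walkWords.mp w.1.2
        rwa [← Fin.cons_self_tail w.1.1, w.2, List.ofFn_cons] at this⟩
      invFun := fun a =>
        ⟨⟨Fin.cons a.1 v, mem_walkWords.mpr (List.ofFn_cons a.1 v ▸ a.2)⟩, Fin.tail_cons ..⟩
      left_inv := fun w => by
        ext : 2
        simp only [← w.2, Fin.cons_self_tail]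
      right_inv := fun a => by simp }

theorem natCard_init_eq (v : Fin k → A) :
    Nat.card {w : walkWords r (k + 1) // Fin.init w.1 = v}
      = Nat.card {b // (List.ofFn v ++ [b]).IsChain r} :=
  Nat.card_congr
    { toFun := fun w => ⟨w.1.1 (Fin.last k), by
        have := mem_walkWords.mp w.1.2
        rwa [← Fin.snoc_init_self w.1.1, w.2, List.ofFn_snoc] at this⟩
      invFun := fun b =>
        ⟨⟨Fin.snoc v b.1, mem_walkWords.mpr (List.ofFn_snoc v b.1 ▸ b.2)⟩, Fin.init_snoc ..⟩
      left_inv := fun w => by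
        ext : 2
        simp only [← w.2, Fin.snoc_init_self]
      right_inv := fun b => by simp }

theorem natCard_tail_eq_natCard_init {d : ℕ} (hin : ∀ a, Nat.card {b // r b a} = d)
    (hout : ∀ a, Nat.card {b // r a b} = d) (v : Fin k → A) :
    Nat.card {w : walkWords r (k + 1) // Fin.tail w.1 = v}
      = Nat.card {w : walkWords r (k + 1) // Fin.init w.1 = v} := by
  rw [natCard_tail_eq, natCard_init_eq]
  cases k with
  | zero => simp
  | succ k =>
    have hcons : ∀ a, (a :: List.ofFn v).IsChain r ↔ r a (v 0) ∧ (List.ofFn v).IsChain r := by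
      intro a
      rw [List.ofFn_succ, List.isChain_cons_cons]
    have hsnoc : ∀ b,
        (List.ofFn v ++ [b]).IsChain r ↔ (List.ofFn v).IsChain r ∧ r (v (Fin.last k)) b := by
      intro b
      simp only [List.isChain_append, List.getLast?_ofFn, List.isChain_singleton, List.head?_cons,
        Option.mem_def, Option.some.injEq, forall_eq', true_and]
    simp only [hcons, hsnoc]
    by_cases hv : (List.ofFn v).IsChain r
    · simp only [hv, and_true, true_and, hin, hout]
    · simp only [hv, and_false, false_and]

theorem exists_reflTransGen_ofFn_eq_drop {x : Fin k → A} {ℓ : List A}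
    (h : (List.ofFn x ++ ℓ).IsChain r) :
    ∃ y, ReflTransGen (HasEdge (fun w : walkWords r (k + 1) => Fin.init w.1)
        (fun w => Fin.tail w.1)) x y ∧ List.ofFn y = (List.ofFn x ++ ℓ).drop ℓ.length := by
  induction ℓ using List.reverseRecOn with
  | nil => exact ⟨x, .refl, by simp⟩
  | append_singleton ℓ a ih =>
    rw [← List.append_assoc] at h
    obtain ⟨y, hxy, hy⟩ := ih h.left_of_append
    have hle : ℓ.length ≤ (List.ofFn x ++ ℓ).length := by simp
    have hya : List.ofFn (Fin.snoc y a : Fin (k + 1) → A)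
        = (List.ofFn x ++ ℓ ++ [a]).drop ℓ.length := by
      rw [List.ofFn_snoc, hy, List.drop_append_of_le_length hle]
    refine ⟨Fin.tail (Fin.snoc y a : Fin (k + 1) → A),
      hxy.tail ⟨⟨(Fin.snoc y a : Fin (k + 1) → A), mem_walkWords.mpr (hya ▸ h.drop _)⟩,
        Fin.init_snoc _ _, rfl⟩, ?_⟩
    rw [List.ofFn_tail, hya, List.tail_drop, List.length_append, List.length_singleton,
      List.append_assoc]

theorem reflTransGen_tail_init (hconn : ∀ a b, ReflTransGen r a b)
    (w w' : walkWords r (k + 1)) :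
    ReflTransGen (HasEdge (fun w : walkWords r (k + 1) => Fin.init w.1) (fun w => Fin.tail w.1))
      (Fin.tail w.1) (Fin.init w'.1) := by
  cases k with
  | zero => rw [Subsingleton.elim (Fin.tail w.1) (Fin.init w'.1)]
  | succ k =>
    set u := Fin.tail w.1
    set v := Fin.init w'.1
    have hu : (List.ofFn u).IsChain r := by
      rw [List.ofFn_tail]
      exact (mem_walkWords.mp w.2).tail
    have hv : (List.ofFn v).IsChain r := by
      have := mem_walkWords.mp w'.2
      rw [← Fin.snoc_init_self w'.1, List.ofFn_snoc] at this
      exact this.left_of_append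
    obtain ⟨l, hl, hlast⟩ :=
      List.exists_isChain_cons_of_relationReflTransGen (hconn (u (Fin.last k)) (v 0))
    set T := List.ofFn fun i => v i.succ
    have hvT : List.ofFn v = v 0 :: T := List.ofFn_succ
    have hul : (List.ofFn u ++ l).IsChain r := List.isChain_append.mpr ⟨hu, hl.tail, by
      rw [List.getLast?_ofFn]
      simpa using (List.isChain_cons.mp hl).1⟩
    have hul_last : (List.ofFn u ++ l).getLast? = some (v 0) := by
      rw [← hlast, ← List.getLast?_eq_some_getLast, List.getLast?_append, List.getLast?_ofFn,
        List.getLast?_cons]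
      cases l.getLast? <;> rfl
    set X := (List.ofFn u ++ l).dropLast
    have hX : X ++ [v 0] = List.ofFn u ++ l := List.dropLast_append_getLast? _ hul_last
    have hchain : (X ++ [v 0] ++ T).IsChain r :=
      (hX ▸ hul).append_overlap (by rwa [List.singleton_append, ← hvT]) (List.cons_ne_nil _ _)
    obtain ⟨y, hreach, hy⟩ := exists_reflTransGen_ofFn_eq_drop (x := u) (ℓ := l ++ T)
      (by rwa [← List.append_assoc, ← hX])
    convert hreach
    apply List.ofFn_injective
    rw [hy, ← List.append_assoc, ← hX, List.append_assoc, List.singleton_append, ← hvT,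
      List.drop_left' (by simp [X, T]; omega)]

theorem hasUCycle_walkWords {d : ℕ} (hin : ∀ a, Nat.card {b // r b a} = d)
    (hout : ∀ a, Nat.card {b // r a b} = d) (hconn : ∀ a b, ReflTransGen r a b)
    (hne : (walkWords r (k + 1)).Nonempty) : HasUCycle (walkWords r (k + 1)) := by
  obtain ⟨σ, hσ⟩ := exists_isEulerianCircuit (natCard_tail_eq_natCard_init hin hout)
    (reflTransGen_tail_init hconn)
  exact HasUCycle.of_isEulerianCircuit hne hσ

end Walks

section Lipschitz

variable (n : ℕ)

def cyclicDist (a b : ZMod n) : ℕ := min (a - b).val (n - (a - b).val)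

theorem cyclicDist_self (a : ZMod n) : cyclicDist n a a = 0 := by
  simp [cyclicDist]

theorem cyclicDist_add_one_le (a : ZMod n) : cyclicDist n (a + 1) a ≤ 1 := by
  rw [cyclicDist, add_sub_cancel_left, ZMod.val_one_eq_one_mod]
  exact (min_le_left _ _).trans (Nat.mod_le 1 n)

theorem natCard_cyclicDist_le_eq (c : ℕ) (a : ZMod n) :
    Nat.card {b // cyclicDist n b a ≤ c} = Nat.card {x // cyclicDist n x 0 ≤ c} :=
  Nat.card_congr ((Equiv.subRight a).subtypeEquiv fun b => by simp [cyclicDist])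

theorem natCard_cyclicDist_le_eq' (c : ℕ) (a : ZMod n) :
    Nat.card {b // cyclicDist n a b ≤ c} = Nat.card {x // cyclicDist n x 0 ≤ c} :=
  Nat.card_congr ((Equiv.subLeft a).subtypeEquiv fun b => by simp [cyclicDist])

theorem reflTransGen_cyclicDist_le [NeZero n] {c : ℕ} (hc : 1 ≤ c) (a b : ZMod n) :
    ReflTransGen (fun a b => cyclicDist n b a ≤ c) a b := by
  have hsteps : ∀ j : ℕ, ReflTransGen (fun a b => cyclicDist n b a ≤ c) a (a + j) := by
    intro j
    induction j with
    | zero => rw [Nat.cast_zero, add_zero]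
    | succ j ih =>
      rw [Nat.cast_succ, ← add_assoc]
      exact ih.tail ((cyclicDist_add_one_le n _).trans hc)
  simpa using hsteps (b - a).val

end Lipschitz

/-- U-cycles of `k`-letter Lipschitz words with constant `c` over the cyclic alphabet
`ZMod n` exist for all `k, n, c ≥ 1`.  A word is Lipschitz with constant `c` if each
successive letter is within cyclic distance `c` of the previous one, where the cyclic
distance between `a` and `b` in `ZMod n` is `min v (n - v)` with `v = (a - b).val`. -/
theorem ucycle_lipschitz_words (k n c : ℕ) [NeZero n] (hk : 1 ≤ k)
    (hc : 1 ≤ c) :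
    HasUCycle (wordsOf (fun w : Fin k → ZMod n =>
      ∀ i : ℕ, ∀ h : i + 1 < k,
        min ((w ⟨i + 1, h⟩ - w ⟨i, by omega⟩).val)
            (n - (w ⟨i + 1, h⟩ - w ⟨i, by omega⟩).val) ≤ c)) := by
  obtain ⟨k, rfl⟩ := Nat.exists_eq_add_of_le' hk
  convert hasUCycle_walkWords (r := fun a b => cyclicDist n b a ≤ c)
    (natCard_cyclicDist_le_eq' n c) (natCard_cyclicDist_le_eq n c)
    (reflTransGen_cyclicDist_le n hc)
    ⟨fun _ => 0, mem_walkWords.mpr (List.isChain_ofFn.mpr fun _ _ => by simp [cyclicDist_self])⟩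
    using 3
  exact (List.isChain_ofFn (r := fun a b => cyclicDist n b a ≤ c)).symm
end

section
/- For every integer n ≥ 1, there exists a universal cycle for the set of walks of length n on the honeycomb lattice, encoded as words w : Fin n → (Fin 3 × Bool) over the six-letter alphabet {x⁺, x⁻, y⁺, y⁻, z⁺, z⁻} (first coordinate the axis, second coordinate the sign) such that consecutive letters have opposite signs: (w(i+1)).2 = ¬(w(i)).2 for all i with i + 1 < n. -/
/-
A honeycomb walk of length `n` is a pair of an arbitrary word over the three axes and one of the
two alternating sign words. Axis words have a U-cycle of length `3 ^ n` (a de Bruijn sequence, read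
off an Eulerian circuit of the de Bruijn graph), sign words the U-cycle `0101…` of length `2`.
Since `3 ^ n` is odd, the Chinese remainder theorem interleaves the two into a U-cycle of length
`2 * 3 ^ n`.

The Eulerian circuit is a longest trail: balance of in- and out-degrees forces it to be closed, and
then strong connectivity forces it to use every edge, since otherwise a rotation of it could be
extended.
-/

open Finset

theorem List.IsChain.append_comm {α : Type*} {R : α → α → Prop} {a b : List α}
    (h : (a ++ b).IsChain R) (hba : ∀ x ∈ b.getLast?, ∀ y ∈ a.head?, R x y) :
    (b ++ a).IsChain R := by
  obtain ⟨ha, hb, -⟩ := List.isChain_append.mp h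
  exact List.isChain_append.mpr ⟨hb, ha, hba⟩

theorem Relation.ReflTransGen.exists_rel_of_not {α : Type*} {r : α → α → Prop} {p : α → Prop}
    {a b : α} (h : Relation.ReflTransGen r a b) (ha : p a) (hb : ¬ p b) :
    ∃ x y, p x ∧ ¬ p y ∧ r x y := by
  induction h with
  | refl => exact absurd ha hb
  | @tail c d _ hcd ih =>
    by_cases hc : p c
    · exact ⟨c, d, hc, hb, hcd⟩
    · exact ih hc

theorem List.Nodup.count_map {α β : Type*} [DecidableEq α] [DecidableEq β] {l : List α}
    (hl : l.Nodup) (f : α → β) (b : β) : (l.map f).count b = #{a ∈ l.toFinset | f a = b} := by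
  rw [List.count_eq_countP, List.countP_map, List.countP_eq_length_filter,
    ← List.toFinset_card_of_nodup (hl.filter _)]
  congr 1
  ext a
  simp only [List.mem_toFinset, List.mem_filter, Finset.mem_filter, Function.comp_apply]
  simp

section Euler

variable {V E : Type*} {s t : E → V}

variable (s t) in
def IsTrail (l : List E) : Prop :=
  l.Nodup ∧ l.IsChain (fun a b => t a = s b)

theorem List.IsChain.map_append_eq_cons_map {l : List E} (hl : l.IsChain (fun a b => t a = s b))
    (hne : l ≠ []) : l.map s ++ [t (l.getLast hne)] = s (l.head hne) :: l.map t := by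
  induction l with
  | nil => exact absurd rfl hne
  | cons a r ih =>
    rcases r with _ | ⟨b, r⟩
    · rfl
    · obtain ⟨hab, hr⟩ := List.isChain_cons_cons.mp hl
      have := ih hr (List.cons_ne_nil b r)
      simp only [List.map_cons, List.head_cons, List.cons_append] at this
      simp only [List.map_cons, List.cons_append, List.getLast_cons_cons, List.head_cons, this, hab]

theorem IsTrail.append_singleton {l : List E} {e : E} (hl : IsTrail s t l) (he : e ∉ l)
    (hlast : ∀ x ∈ l.getLast?, t x = s e) : IsTrail s t (l ++ [e]) :=
  ⟨hl.1.append (List.nodup_singleton e) (by simpa using he),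
    List.isChain_append.mpr ⟨hl.2, List.isChain_singleton e, by simpa using hlast⟩⟩

theorem exists_isTrail_forall_length_le [Fintype E] :
    ∃ l, IsTrail s t l ∧ ∀ l', IsTrail s t l' → l'.length ≤ l.length := by
  set S : Set ℕ := {m | ∃ l, IsTrail s t l ∧ l.length = m}
  have hbdd : BddAbove S := ⟨Fintype.card E, by rintro _ ⟨l, hl, rfl⟩; exact hl.1.length_le_card⟩
  have hne : S.Nonempty := ⟨0, [], ⟨List.nodup_nil, List.isChain_nil⟩, rfl⟩
  obtain ⟨l, hl, hlen⟩ := Nat.sSup_mem hne hbdd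
  exact ⟨l, hl, fun l' hl' => hlen ▸ le_csSup hbdd ⟨l', hl', rfl⟩⟩

theorem IsTrail.head_eq_getLast_of_forall_mem [Fintype E] [DecidableEq V]
    (hbal : ∀ v, #{e | s e = v} = #{e | t e = v}) {l : List E} (hl : IsTrail s t l) (hne : l ≠ [])
    (hmax : ∀ e, s e = t (l.getLast hne) → e ∈ l) : s (l.head hne) = t (l.getLast hne) := by
  classical
  set v := t (l.getLast hne)
  have hcount := congrArg (List.count v) (hl.2.map_append_eq_cons_map hne)
  have hs : (l.map s).count v = #{e | s e = v} := by
    rw [hl.1.count_map]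
    congr 1
    ext e
    simpa using hmax e
  have ht : (l.map t).count v ≤ #{e | t e = v} := by
    rw [hl.1.count_map]
    exact card_le_card (filter_subset_filter _ (subset_univ _))
  -- all edges leaving `v` occur in `l`, but possibly not all edges entering `v`
  by_contra h
  rw [List.count_append, List.count_singleton_self, List.count_cons_of_ne h, hs,
    hbal] at hcount
  omega

theorem IsTrail.head_eq_getLast_of_maximal [Fintype E] [DecidableEq V]
    (hbal : ∀ v, #{e | s e = v} = #{e | t e = v}) {l : List E} (hl : IsTrail s t l)
    (hmax : ∀ l', IsTrail s t l' → l'.length ≤ l.length) (hne : l ≠ []) :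
    s (l.head hne) = t (l.getLast hne) :=
  hl.head_eq_getLast_of_forall_mem hbal hne fun e he => by
    by_contra hel
    have := hmax _ (hl.append_singleton hel (by simp [List.getLast?_eq_some_getLast hne, he]))
    simp at this

theorem IsTrail.mem_of_maximal [Fintype E] [DecidableEq V]
    (hbal : ∀ v, #{e | s e = v} = #{e | t e = v})
    (hconn : ∀ a b, Relation.ReflTransGen (fun a b => t a = s b) a b) {l : List E}
    (hl : IsTrail s t l) (hmax : ∀ l', IsTrail s t l' → l'.length ≤ l.length) (e : E) :
    e ∈ l := by
  by_contra he
  have hne : l ≠ [] := by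
    rintro rfl
    simpa using hmax [e] ⟨List.nodup_singleton e, List.isChain_singleton e⟩
  obtain ⟨x, y, hx, hy, hxy⟩ := (hconn (l.head hne) e).exists_rel_of_not (List.head_mem hne) he
  have hclosed := hl.head_eq_getLast_of_maximal hbal hmax hne
  obtain ⟨l₁, l₂, rfl⟩ := List.append_of_mem hx
  -- rotate the closed trail so that it ends with `x`, then continue it with `y`
  have hrot : IsTrail s t (l₂ ++ (l₁ ++ [x])) := by
    rw [List.append_cons] at hl
    refine ⟨List.perm_append_comm.nodup_iff.mp hl.1, hl.2.append_comm ?_⟩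
    intro a ha b hb
    have hlast : (l₁ ++ x :: l₂).getLast? = some a := by
      simp [List.getLast?_append, List.getLast?_cons, Option.mem_def.mp ha]
    have hhead : (l₁ ++ x :: l₂).head? = some b := by
      simpa [List.head?_append] using hb
    rw [List.getLast?_eq_some_getLast hne, Option.some_inj] at hlast
    rw [List.head?_eq_some_head hne, Option.some_inj] at hhead
    rw [← hlast, ← hhead, hclosed]
  have hy' : y ∉ l₂ ++ (l₁ ++ [x]) := fun h => hy (by simp at h ⊢; tauto)
  have := hmax _ (hrot.append_singleton hy' (by simpa using hxy))
  simp only [List.length_append, List.length_cons] at this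
  omega

theorem IsTrail.exists_bijective_zmod [Fintype E] {l : List E} (hl : IsTrail s t l)
    (hne : l ≠ []) (hclosed : s (l.head hne) = t (l.getLast hne)) (hall : ∀ e, e ∈ l) :
    ∃ f : ZMod (Fintype.card E) → E, Function.Bijective f ∧ ∀ i, t (f i) = s (f (i + 1)) := by
  classical
  rw [← Fintype.card_congr (hl.1.getEquivOfForallMemList l hall), Fintype.card_fin]
  have : NeZero l.length := ⟨by simpa using hne⟩
  refine ⟨fun i => l[i.val]'(ZMod.val_lt i), ⟨fun i j h => ZMod.val_injective _ ?_, fun e => ?_⟩,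
    fun i => ?_⟩
  · exact hl.1.getElem_inj_iff.mp h
  · obtain ⟨k, hk, rfl⟩ := List.getElem_of_mem (hall e)
    exact ⟨k, by simp [ZMod.val_cast_of_lt hk]⟩
  · obtain ⟨k, hk, rfl⟩ : ∃ k < l.length, (k : ZMod l.length) = i :=
      ⟨i.val, ZMod.val_lt i, ZMod.natCast_zmod_val i⟩
    simp only [← Nat.cast_add_one, ZMod.val_cast_of_lt hk]
    obtain hlt | heq : k + 1 < l.length ∨ k + 1 = l.length := by omega
    · simp only [ZMod.val_cast_of_lt hlt]
      exact List.isChain_iff_getElem.mp hl.2 k hlt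
    · simp only [heq, ZMod.natCast_self, ZMod.val_zero]
      rw [← List.head_eq_getElem hne, hclosed, List.getLast_eq_getElem]
      simp only [← heq, Nat.add_sub_cancel]

theorem exists_eulerian_circuit [Fintype E] [Nonempty E] [DecidableEq V]
    (hbal : ∀ v, #{e | s e = v} = #{e | t e = v})
    (hconn : ∀ a b, Relation.ReflTransGen (fun a b => t a = s b) a b) :
    ∃ f : ZMod (Fintype.card E) → E, Function.Bijective f ∧ ∀ i, t (f i) = s (f (i + 1)) := by
  obtain ⟨l, hl, hmax⟩ := exists_isTrail_forall_length_le (s := s) (t := t)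
  have hall := hl.mem_of_maximal hbal hconn hmax
  have hne : l ≠ [] := List.ne_nil_of_mem (hall (Classical.arbitrary E))
  exact hl.exists_bijective_zmod hne (hl.head_eq_getLast_of_maximal hbal hmax hne) hall

end Euler

section UCycle

variable {A B : Type*} {m k : ℕ}

def cyclicWindows (c : ZMod m → A) (k : ℕ) : ZMod m → Fin k → A :=
  fun i j => c (i + (j.val : ZMod m))

def IsUCycle (c : ZMod m → A) (S : Set (Fin k → A)) : Prop :=
  Set.BijOn (cyclicWindows c k) Set.univ S

theorem IsUCycle.hasUCycle {c : ZMod m → A} {S : Finset (Fin k → A)}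
    (h : IsUCycle c (S : Set (Fin k → A))) : HasUCycle S := by
  obtain rfl : m = S.card := by simpa using Nat.card_congr h.equiv
  exact ⟨c, h⟩

theorem IsUCycle.prod {a b : ℕ} (hab : a.Coprime b) {c₁ : ZMod a → A} {c₂ : ZMod b → B}
    {S : Set (Fin k → A)} {T : Set (Fin k → B)} (h₁ : IsUCycle c₁ S) (h₂ : IsUCycle c₂ T) :
    IsUCycle (fun i => (c₁ (ZMod.chineseRemainder hab i).1, c₂ (ZMod.chineseRemainder hab i).2))
      {w : Fin k → A × B | (fun j => (w j).1) ∈ S ∧ (fun j => (w j).2) ∈ T} := by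
  set e := ZMod.chineseRemainder hab
  have hwin : cyclicWindows (fun i => (c₁ (e i).1, c₂ (e i).2)) k =
      (Equiv.arrowProdEquivProdArrow _ _ _).symm ∘
        (fun p => (cyclicWindows c₁ k p.1, cyclicWindows c₂ k p.2)) ∘ e := by
    funext i j
    simp [cyclicWindows, Equiv.arrowProdEquivProdArrow]
  have he : Set.BijOn e Set.univ (Set.univ ×ˢ Set.univ) := by
    rw [Set.univ_prod_univ]
    exact Set.bijOn_univ.mpr e.bijective
  rw [IsUCycle, hwin]
  refine ((Equiv.bijOn _ fun w => ?_).comp (h₁.prodMap h₂)).comp he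
  simp [Equiv.arrowProdEquivProdArrow]

def alternatingWords (n : ℕ) : Set (Fin n → Bool) :=
  {b | ∀ i (h : i + 1 < n), b ⟨i + 1, h⟩ = !b ⟨i, Nat.lt_of_succ_lt h⟩}

theorem eq_of_mem_alternatingWords {n : ℕ} (hn : 0 < n) {b b' : Fin n → Bool}
    (hb : b ∈ alternatingWords n) (hb' : b' ∈ alternatingWords n) (h0 : b ⟨0, hn⟩ = b' ⟨0, hn⟩) :
    b = b' := by
  funext ⟨j, hj⟩
  induction j with
  | zero => exact h0
  | succ j ih => rw [hb j hj, hb' j hj, ih]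

theorem isUCycle_alternatingWords {n : ℕ} (hn : 0 < n) :
    IsUCycle (fun i : ZMod 2 => decide (i = 1)) (alternatingWords n) := by
  have hmem : ∀ i, cyclicWindows (fun i : ZMod 2 => decide (i = 1)) n i ∈ alternatingWords n := by
    intro i j _
    have hflip : ∀ x : ZMod 2, decide (x + 1 = 1) = !decide (x = 1) := by decide
    simp [cyclicWindows, ← hflip, add_assoc]
  refine ⟨fun i _ => hmem i, fun i _ i' _ h => ?_, fun b hb => ?_⟩
  · have h0 := congrFun h ⟨0, hn⟩
    simp only [cyclicWindows, Nat.cast_zero, add_zero, decide_eq_decide] at h0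
    exact (by decide : ∀ x y : ZMod 2, (x = 1 ↔ y = 1) → x = y) i i' h0
  · obtain ⟨i, hi⟩ : ∃ i : ZMod 2, decide (i = 1) = b ⟨0, hn⟩ := by
      cases b ⟨0, hn⟩
      exacts [⟨0, rfl⟩, ⟨1, rfl⟩]
    exact ⟨i, trivial, eq_of_mem_alternatingWords hn (hmem i) hb (by simpa [cyclicWindows])⟩

end UCycle

section DeBruijn

variable {A : Type*} {k : ℕ}

theorem card_filter_tail_eq [Fintype A] [DecidableEq A] (v : Fin k → A) :
    #{w : Fin (k + 1) → A | Fin.tail w = v} = Fintype.card A := by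
  rw [← Fintype.card_subtype]
  exact Fintype.card_congr
    { toFun := fun w => w.1 0
      invFun := fun a => ⟨Fin.cons a v, Fin.tail_cons (α := fun _ => A) a v⟩
      left_inv := fun ⟨w, hw⟩ => by subst hw; simp [Fin.cons_self_tail]
      right_inv := fun a => by simp }

theorem card_filter_init_eq [Fintype A] [DecidableEq A] (v : Fin k → A) :
    #{w : Fin (k + 1) → A | Fin.init w = v} = Fintype.card A := by
  rw [← Fintype.card_subtype]
  exact Fintype.card_congr
    { toFun := fun w => w.1 (Fin.last k)
      invFun := fun a => ⟨Fin.snoc v a, Fin.init_snoc (α := fun _ => A) a v⟩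
      left_inv := fun ⟨w, hw⟩ => by subst hw; simp [Fin.snoc_init_self]
      right_inv := fun a => by simp }

-- `a` reaches `b` by shifting in the letters of `b` one at a time; `m` of them remain to come.
theorem reflTransGen_tail_eq_init_of_shift :
    ∀ (m : ℕ) (a b : Fin (k + 1) → A),
      (∀ i (h : i + m < k + 1), a ⟨i + m, h⟩ = b ⟨i, by omega⟩) →
      Relation.ReflTransGen (fun w w' : Fin (k + 1) → A => Fin.tail w = Fin.init w') a b
  | 0, a, b, hab => by
    obtain rfl : a = b := funext fun i => hab i i.isLt
    exact .refl
  | m + 1, a, b, hab => by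
    refine .head (Fin.init_snoc (α := fun _ => A) (b ⟨k - m, by omega⟩) (Fin.tail a)).symm
      (reflTransGen_tail_eq_init_of_shift m _ b fun i h => ?_)
    simp only [Fin.snoc, Fin.tail, cast_eq]
    split_ifs with hik
    · simpa [Nat.add_right_comm, add_assoc] using hab i (by omega)
    · congr
      omega

-- The de Bruijn graph has the words of length `k` as vertices and the words of length `k + 1` as
-- edges, from their first `k` letters to their last `k` letters.
theorem exists_isUCycle_univ (A : Type*) [Fintype A] [Nonempty A] (n : ℕ) :
    ∃ d : ZMod (Fintype.card A ^ n) → A, IsUCycle d (Set.univ : Set (Fin n → A)) := by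
  classical
  rcases n with _ | k
  · rw [pow_zero]
    refine ⟨fun _ => Classical.arbitrary A, Set.bijOn_univ.mpr ⟨?_, ?_⟩⟩
    · exact fun _ _ _ => Subsingleton.elim _ _
    · exact fun _ => ⟨0, Subsingleton.elim _ _⟩
  obtain ⟨f, hf, hstep⟩ := exists_eulerian_circuit (V := Fin k → A) (s := Fin.init) (t := Fin.tail)
    (fun v => by rw [card_filter_init_eq, card_filter_tail_eq])
    (fun a b => reflTransGen_tail_eq_init_of_shift (k + 1) a b fun i h => by omega)
  rw [show Fintype.card A ^ (k + 1) = Fintype.card (Fin (k + 1) → A) by simp]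
  refine ⟨fun i => f i 0, Set.bijOn_univ.mpr ?_⟩
  suffices cyclicWindows (fun i => f i 0) (k + 1) = f by rwa [this]
  funext i j
  induction j using Fin.induction generalizing i with
  | zero => simp [cyclicWindows]
  | succ j ih =>
    have := congrFun (hstep i) j
    simp only [Fin.tail, Fin.init] at this
    rw [this, ← ih]
    simp [cyclicWindows, add_assoc, add_comm (1 : ZMod _)]

end DeBruijn

/-- U-cycles of walks of length `n` on the honeycomb lattice exist for all `n ≥ 1`.
Walks are encoded as words over `Fin 3 × Bool` (axis and sign) in which consecutive
letters have opposite signs. -/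
theorem ucycle_honeycomb_walks (n : ℕ) (hn : 1 ≤ n) :
    HasUCycle (wordsOf (fun w : Fin n → Fin 3 × Bool =>
      ∀ i : ℕ, ∀ h : i + 1 < n, (w ⟨i + 1, h⟩).2 = !(w ⟨i, by omega⟩).2)) := by
  obtain ⟨d, hd⟩ := exists_isUCycle_univ (Fin 3) n
  have hcop : (Fintype.card (Fin 3) ^ n).Coprime 2 := Nat.Coprime.pow_left n (by decide)
  apply IsUCycle.hasUCycle
  convert hd.prod hcop (isUCycle_alternatingWords hn) using 1
  ext w
  simp [wordsOf, alternatingWords]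
end

section
/- Fix integers n, k with n ≥ k + 1 ≥ 4 and let D be the transition digraph for three-dimensional lattice paths of length n ending within ℓ¹-distance k of the origin (vertices: words v : Fin (n−1) → Σ with ‖∑_i v(i)‖₁ ≤ k + 1; edges: one-letter shifts whose length-n concatenation has letter-sum of ℓ¹ norm ≤ k). If n is odd, then from every vertex of D there is a directed path to a vertex whose letter-sum is the zero vector; if n is even, then from every vertex of D there is a directed path to a vertex whose letter-sum has ℓ¹ norm equal to 1. -/
/-- The six unit step vectors `±e₁, ±e₂, ±e₃` in `ℤ³` (encoded as `ℤ × ℤ × ℤ`). -/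
def stepSet3 : Finset (ℤ × ℤ × ℤ) :=
  {(1, 0, 0), (-1, 0, 0), (0, 1, 0), (0, -1, 0), (0, 0, 1), (0, 0, -1)}

/-- The ℓ¹ norm on `ℤ³`. -/
def l1 (v : ℤ × ℤ × ℤ) : ℤ := |v.1| + |v.2.1| + |v.2.2|

section Aux

abbrev P3 := ℤ × ℤ × ℤ
abbrev Stp := ↥stepSet3

lemma l1_nonneg (s : P3) : 0 ≤ l1 s := by
  obtain ⟨x, y, z⟩ := s
  simp only [l1, Int.abs_eq_natAbs]
  omega

lemma l1_eq_zero {s : P3} (h : l1 s ≤ 0) : s = 0 := by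
  obtain ⟨x, y, z⟩ := s
  simp only [l1, Int.abs_eq_natAbs] at h
  simp only [Prod.mk_eq_zero]
  omega

lemma l1_sub_letter (a : P3) (ha : a ∈ stepSet3) (s : P3) :
    l1 (s - a) = l1 s + 1 ∨ l1 (s - a) = l1 s - 1 := by
  obtain ⟨x, y, z⟩ := s
  obtain ⟨a1, a2, a3⟩ := a
  simp only [stepSet3, Finset.mem_insert, Finset.mem_singleton, Prod.mk.injEq] at ha
  simp only [l1, Prod.mk_sub_mk, Int.abs_eq_natAbs]
  omega

lemma l1_add_letter (a : P3) (ha : a ∈ stepSet3) (s : P3) :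
    l1 (s + a) = l1 s + 1 ∨ l1 (s + a) = l1 s - 1 := by
  obtain ⟨x, y, z⟩ := s
  obtain ⟨a1, a2, a3⟩ := a
  simp only [stepSet3, Finset.mem_insert, Finset.mem_singleton, Prod.mk.injEq] at ha
  simp only [l1, Prod.mk_add_mk, Int.abs_eq_natAbs]
  omega

lemma dot_nonpos_of_not_red (s a : P3) (ha : a ∈ stepSet3) (h : ¬ l1 (s - a) < l1 s) :
    s.1 * a.1 + s.2.1 * a.2.1 + s.2.2 * a.2.2 ≤ 0 := by
  obtain ⟨x, y, z⟩ := s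
  obtain ⟨a1, a2, a3⟩ := a
  simp only [stepSet3, Finset.mem_insert, Finset.mem_singleton, Prod.mk.injEq] at ha
  simp only [l1, Prod.mk_sub_mk, Int.abs_eq_natAbs] at h
  rcases ha with ⟨rfl,rfl,rfl⟩|⟨rfl,rfl,rfl⟩|⟨rfl,rfl,rfl⟩|⟨rfl,rfl,rfl⟩|⟨rfl,rfl,rfl⟩|⟨rfl,rfl,rfl⟩ <;>
    simp <;> omega

lemma exists_red {m : ℕ} (v : Fin m → Stp) (hs : (∑ i, (v i : P3)) ≠ 0) :
    ∃ i : Fin m, l1 ((∑ i, (v i : P3)) - (v i : P3)) < l1 (∑ i, (v i : P3)) := by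
  by_contra hcon
  push_neg at hcon
  set s := ∑ i, (v i : P3) with hsdef
  have hdot : ∀ i : Fin m,
      s.1 * (v i : P3).1 + s.2.1 * (v i : P3).2.1 + s.2.2 * (v i : P3).2.2 ≤ 0 :=
    fun i => dot_nonpos_of_not_red s (v i : P3) (v i).2 (not_lt.2 (hcon i))
  have hsum : ∑ i : Fin m,
      (s.1 * (v i : P3).1 + s.2.1 * (v i : P3).2.1 + s.2.2 * (v i : P3).2.2) ≤ 0 :=
    Finset.sum_nonpos (fun i _ => hdot i)
  have e1 : s.1 = ∑ i : Fin m, (v i : P3).1 := by rw [hsdef, Prod.fst_sum]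
  have e2 : s.2.1 = ∑ i : Fin m, (v i : P3).2.1 := by rw [hsdef, Prod.snd_sum, Prod.fst_sum]
  have e3 : s.2.2 = ∑ i : Fin m, (v i : P3).2.2 := by rw [hsdef, Prod.snd_sum, Prod.snd_sum]
  have hexp : ∑ i : Fin m,
      (s.1 * (v i : P3).1 + s.2.1 * (v i : P3).2.1 + s.2.2 * (v i : P3).2.2)
      = s.1 * s.1 + s.2.1 * s.2.1 + s.2.2 * s.2.2 := by
    rw [Finset.sum_add_distrib, Finset.sum_add_distrib, ← Finset.mul_sum, ← Finset.mul_sum,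
      ← Finset.mul_sum, ← e1, ← e2, ← e3]
  rw [hexp] at hsum
  have h1 : s.1 = 0 := by nlinarith [mul_self_nonneg s.1, mul_self_nonneg s.2.1, mul_self_nonneg s.2.2]
  have h2 : s.2.1 = 0 := by nlinarith [mul_self_nonneg s.1, mul_self_nonneg s.2.1, mul_self_nonneg s.2.2]
  have h3 : s.2.2 = 0 := by nlinarith [mul_self_nonneg s.1, mul_self_nonneg s.2.1, mul_self_nonneg s.2.2]
  apply hs
  rw [show (0 : P3) = ((0 : ℤ), (0 : ℤ), (0 : ℤ)) from rfl, Prod.ext_iff, Prod.ext_iff]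
  exact ⟨h1, h2, h3⟩

lemma exists_reduce (s : P3) (hs : s ≠ 0) : ∃ b ∈ stepSet3, l1 (s + b) < l1 s := by
  obtain ⟨x, y, z⟩ := s
  have hne : ¬ (x = 0 ∧ y = 0 ∧ z = 0) := by
    rintro ⟨rfl, rfl, rfl⟩; exact hs rfl
  have hmem : ∀ b : P3, b ∈ ([((1:ℤ),(0:ℤ),(0:ℤ)),(-1,0,0),(0,1,0),(0,-1,0),(0,0,1),(0,0,-1)] : List P3) → b ∈ stepSet3 := by
    intro b hb; fin_cases hb <;> simp [stepSet3]
  rcases lt_trichotomy x 0 with hx|hx|hx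
  · exact ⟨(1,0,0), hmem _ (by norm_num), by
      simp only [l1, Prod.mk_add_mk, Int.abs_eq_natAbs]; omega⟩
  · rcases lt_trichotomy y 0 with hy|hy|hy
    · exact ⟨(0,1,0), hmem _ (by norm_num), by
        simp only [l1, Prod.mk_add_mk, Int.abs_eq_natAbs]; omega⟩
    · rcases lt_trichotomy z 0 with hz|hz|hz
      · exact ⟨(0,0,1), hmem _ (by norm_num), by
          simp only [l1, Prod.mk_add_mk, Int.abs_eq_natAbs]; omega⟩
      · exact absurd ⟨hx, hy, hz⟩ hne
      · exact ⟨(0,0,-1), hmem _ (by norm_num), by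
          simp only [l1, Prod.mk_add_mk, Int.abs_eq_natAbs]; omega⟩
    · exact ⟨(0,-1,0), hmem _ (by norm_num), by
        simp only [l1, Prod.mk_add_mk, Int.abs_eq_natAbs]; omega⟩
  · exact ⟨(-1,0,0), hmem _ (by norm_num), by
      simp only [l1, Prod.mk_add_mk, Int.abs_eq_natAbs]; omega⟩

lemma sum_parity : ∀ {m : ℕ} (v : Fin m → Stp), l1 (∑ i, (v i : P3)) % 2 = (m : ℤ) % 2 := by
  intro m
  induction m with
  | zero => intro v; simp [l1]
  | succ m ih =>
    intro v
    rw [Fin.sum_univ_succ]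
    have h := ih (fun i => v i.succ)
    have hA := l1_add_letter (v 0 : P3) (v 0).2 (∑ i : Fin m, (v i.succ : P3))
    rw [add_comm] at hA
    have hcast : ((m + 1 : ℕ) : ℤ) = (m : ℤ) + 1 := by push_cast; ring
    rw [hcast]
    omega

def push {m : ℕ} (v : Fin m → Stp) (b : Stp) : Fin m → Stp :=
  fun i => if h : i.1 + 1 < m then v ⟨i.1 + 1, h⟩ else b

lemma push_lt {m : ℕ} (v : Fin m → Stp) (b : Stp) (j : Fin m) (h : j.1 + 1 < m) :
    push v b j = v ⟨j.1 + 1, h⟩ := dif_pos h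

lemma push_last {m : ℕ} (v : Fin m → Stp) (b : Stp) (j : Fin m) (hj : ¬ j.1 + 1 < m) :
    push v b j = b := dif_neg hj

lemma sum_push {m : ℕ} (hm : 1 ≤ m) (v : Fin m → Stp) (b : Stp) :
    (∑ i, (push v b i : P3)) = (∑ i, (v i : P3)) - (v ⟨0, hm⟩ : P3) + b := by
  obtain ⟨m', rfl⟩ : ∃ m', m = m' + 1 := ⟨m - 1, by omega⟩
  rw [Fin.sum_univ_castSucc (f := fun i => ((push v b i : P3)))]
  rw [Fin.sum_univ_succ (f := fun i => ((v i : P3)))]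
  have h1 : ∀ i : Fin m', push v b i.castSucc = v i.succ := by
    intro i
    rw [push_lt v b i.castSucc (by simp only [Fin.coe_castSucc]; omega)]
    congr 1
  have h2 : push v b (Fin.last m') = b := push_last v b _ (by simp)
  simp only [h1, h2]
  have h0 : (⟨0, hm⟩ : Fin (m' + 1)) = 0 := rfl
  rw [h0]
  abel

end Aux


set_option maxHeartbeats 4000000 in
lemma keyLemma' (x y z a1 a2 a3 r1 r2 r3 : ℤ)
    (ha : (a1 = 1 ∧ a2 = 0 ∧ a3 = 0) ∨ (a1 = -1 ∧ a2 = 0 ∧ a3 = 0) ∨ (a1 = 0 ∧ a2 = 1 ∧ a3 = 0) ∨ (a1 = 0 ∧ a2 = -1 ∧ a3 = 0) ∨ (a1 = 0 ∧ a2 = 0 ∧ a3 = 1) ∨ (a1 = 0 ∧ a2 = 0 ∧ a3 = -1))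
    (hr : (r1 = 1 ∧ r2 = 0 ∧ r3 = 0) ∨ (r1 = -1 ∧ r2 = 0 ∧ r3 = 0) ∨ (r1 = 0 ∧ r2 = 1 ∧ r3 = 0) ∨ (r1 = 0 ∧ r2 = -1 ∧ r3 = 0) ∨ (r1 = 0 ∧ r2 = 0 ∧ r3 = 1) ∨ (r1 = 0 ∧ r2 = 0 ∧ r3 = -1))
    (h2 : 2 ≤ ((x).natAbs : ℤ) + ((y).natAbs : ℤ) + ((z).natAbs : ℤ))
    (hred : ((x - r1).natAbs : ℤ) + ((y - r2).natAbs : ℤ) + ((z - r3).natAbs : ℤ) < ((x).natAbs : ℤ) + ((y).natAbs : ℤ) + ((z).natAbs : ℤ))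
    (hnred : ¬ (((x - a1).natAbs : ℤ) + ((y - a2).natAbs : ℤ) + ((z - a3).natAbs : ℤ) < ((x).natAbs : ℤ) + ((y).natAbs : ℤ) + ((z).natAbs : ℤ))) :
    ∃ b1 b2 b3 : ℤ, ((b1 = 1 ∧ b2 = 0 ∧ b3 = 0) ∨ (b1 = -1 ∧ b2 = 0 ∧ b3 = 0) ∨ (b1 = 0 ∧ b2 = 1 ∧ b3 = 0) ∨ (b1 = 0 ∧ b2 = -1 ∧ b3 = 0) ∨ (b1 = 0 ∧ b2 = 0 ∧ b3 = 1) ∨ (b1 = 0 ∧ b2 = 0 ∧ b3 = -1)) ∧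
      (((x + b1).natAbs : ℤ) + ((y + b2).natAbs : ℤ) + ((z + b3).natAbs : ℤ) + 1 ≤ ((x).natAbs : ℤ) + ((y).natAbs : ℤ) + ((z).natAbs : ℤ)) ∧
      (((x - a1 + b1).natAbs : ℤ) + ((y - a2 + b2).natAbs : ℤ) + ((z - a3 + b3).natAbs : ℤ) ≤ ((x).natAbs : ℤ) + ((y).natAbs : ℤ) + ((z).natAbs : ℤ)) ∧
      (((x - a1 + b1).natAbs : ℤ) + ((y - a2 + b2).natAbs : ℤ) + ((z - a3 + b3).natAbs : ℤ) = ((x).natAbs : ℤ) + ((y).natAbs : ℤ) + ((z).natAbs : ℤ) → ((x - a1 + b1 - r1).natAbs : ℤ) + ((y - a2 + b2 - r2).natAbs : ℤ) + ((z - a3 + b3 - r3).natAbs : ℤ) < ((x - a1 + b1).natAbs : ℤ) + ((y - a2 + b2).natAbs : ℤ) + ((z - a3 + b3).natAbs : ℤ)) := by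
  rcases ha with ⟨rfl,rfl,rfl⟩|⟨rfl,rfl,rfl⟩|⟨rfl,rfl,rfl⟩|⟨rfl,rfl,rfl⟩|⟨rfl,rfl,rfl⟩|⟨rfl,rfl,rfl⟩
  · -- a = (1,0,0)
    rcases lt_trichotomy x 0 with hp|hp|hp
    · exact ⟨1, 0, 0, by omega, by omega, by omega, by omega⟩
    · rcases hr with ⟨rfl,rfl,rfl⟩|⟨rfl,rfl,rfl⟩|⟨rfl,rfl,rfl⟩|⟨rfl,rfl,rfl⟩|⟨rfl,rfl,rfl⟩|⟨rfl,rfl,rfl⟩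
      · exfalso; omega
      · exfalso; omega
      · rcases lt_trichotomy z 0 with ht|ht|ht
        · exact ⟨0, 0, 1, by omega, by omega, by omega, by omega⟩
        · exact ⟨0, -1, 0, by omega, by omega, by omega, by omega⟩
        · exact ⟨0, 0, -1, by omega, by omega, by omega, by omega⟩
      · rcases lt_trichotomy z 0 with ht|ht|ht
        · exact ⟨0, 0, 1, by omega, by omega, by omega, by omega⟩
        · exact ⟨0, 1, 0, by omega, by omega, by omega, by omega⟩
        · exact ⟨0, 0, -1, by omega, by omega, by omega, by omega⟩
      · rcases lt_trichotomy y 0 with ht|ht|ht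
        · exact ⟨0, 1, 0, by omega, by omega, by omega, by omega⟩
        · exact ⟨0, 0, -1, by omega, by omega, by omega, by omega⟩
        · exact ⟨0, -1, 0, by omega, by omega, by omega, by omega⟩
      · rcases lt_trichotomy y 0 with ht|ht|ht
        · exact ⟨0, 1, 0, by omega, by omega, by omega, by omega⟩
        · exact ⟨0, 0, 1, by omega, by omega, by omega, by omega⟩
        · exact ⟨0, -1, 0, by omega, by omega, by omega, by omega⟩
    · exfalso; omega
  · -- a = (-1,0,0)
    rcases lt_trichotomy x 0 with hp|hp|hp
    · exfalso; omega
    · rcases hr with ⟨rfl,rfl,rfl⟩|⟨rfl,rfl,rfl⟩|⟨rfl,rfl,rfl⟩|⟨rfl,rfl,rfl⟩|⟨rfl,rfl,rfl⟩|⟨rfl,rfl,rfl⟩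
      · exfalso; omega
      · exfalso; omega
      · rcases lt_trichotomy z 0 with ht|ht|ht
        · exact ⟨0, 0, 1, by omega, by omega, by omega, by omega⟩
        · exact ⟨0, -1, 0, by omega, by omega, by omega, by omega⟩
        · exact ⟨0, 0, -1, by omega, by omega, by omega, by omega⟩
      · rcases lt_trichotomy z 0 with ht|ht|ht
        · exact ⟨0, 0, 1, by omega, by omega, by omega, by omega⟩
        · exact ⟨0, 1, 0, by omega, by omega, by omega, by omega⟩
        · exact ⟨0, 0, -1, by omega, by omega, by omega, by omega⟩
      · rcases lt_trichotomy y 0 with ht|ht|ht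
        · exact ⟨0, 1, 0, by omega, by omega, by omega, by omega⟩
        · exact ⟨0, 0, -1, by omega, by omega, by omega, by omega⟩
        · exact ⟨0, -1, 0, by omega, by omega, by omega, by omega⟩
      · rcases lt_trichotomy y 0 with ht|ht|ht
        · exact ⟨0, 1, 0, by omega, by omega, by omega, by omega⟩
        · exact ⟨0, 0, 1, by omega, by omega, by omega, by omega⟩
        · exact ⟨0, -1, 0, by omega, by omega, by omega, by omega⟩
    · exact ⟨-1, 0, 0, by omega, by omega, by omega, by omega⟩
  · -- a = (0,1,0)
    rcases lt_trichotomy y 0 with hp|hp|hp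
    · exact ⟨0, 1, 0, by omega, by omega, by omega, by omega⟩
    · rcases hr with ⟨rfl,rfl,rfl⟩|⟨rfl,rfl,rfl⟩|⟨rfl,rfl,rfl⟩|⟨rfl,rfl,rfl⟩|⟨rfl,rfl,rfl⟩|⟨rfl,rfl,rfl⟩
      · rcases lt_trichotomy z 0 with ht|ht|ht
        · exact ⟨0, 0, 1, by omega, by omega, by omega, by omega⟩
        · exact ⟨-1, 0, 0, by omega, by omega, by omega, by omega⟩
        · exact ⟨0, 0, -1, by omega, by omega, by omega, by omega⟩
      · rcases lt_trichotomy z 0 with ht|ht|ht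
        · exact ⟨0, 0, 1, by omega, by omega, by omega, by omega⟩
        · exact ⟨1, 0, 0, by omega, by omega, by omega, by omega⟩
        · exact ⟨0, 0, -1, by omega, by omega, by omega, by omega⟩
      · exfalso; omega
      · exfalso; omega
      · rcases lt_trichotomy x 0 with ht|ht|ht
        · exact ⟨1, 0, 0, by omega, by omega, by omega, by omega⟩
        · exact ⟨0, 0, -1, by omega, by omega, by omega, by omega⟩
        · exact ⟨-1, 0, 0, by omega, by omega, by omega, by omega⟩
      · rcases lt_trichotomy x 0 with ht|ht|ht
        · exact ⟨1, 0, 0, by omega, by omega, by omega, by omega⟩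
        · exact ⟨0, 0, 1, by omega, by omega, by omega, by omega⟩
        · exact ⟨-1, 0, 0, by omega, by omega, by omega, by omega⟩
    · exfalso; omega
  · -- a = (0,-1,0)
    rcases lt_trichotomy y 0 with hp|hp|hp
    · exfalso; omega
    · rcases hr with ⟨rfl,rfl,rfl⟩|⟨rfl,rfl,rfl⟩|⟨rfl,rfl,rfl⟩|⟨rfl,rfl,rfl⟩|⟨rfl,rfl,rfl⟩|⟨rfl,rfl,rfl⟩
      · rcases lt_trichotomy z 0 with ht|ht|ht
        · exact ⟨0, 0, 1, by omega, by omega, by omega, by omega⟩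
        · exact ⟨-1, 0, 0, by omega, by omega, by omega, by omega⟩
        · exact ⟨0, 0, -1, by omega, by omega, by omega, by omega⟩
      · rcases lt_trichotomy z 0 with ht|ht|ht
        · exact ⟨0, 0, 1, by omega, by omega, by omega, by omega⟩
        · exact ⟨1, 0, 0, by omega, by omega, by omega, by omega⟩
        · exact ⟨0, 0, -1, by omega, by omega, by omega, by omega⟩
      · exfalso; omega
      · exfalso; omega
      · rcases lt_trichotomy x 0 with ht|ht|ht
        · exact ⟨1, 0, 0, by omega, by omega, by omega, by omega⟩
        · exact ⟨0, 0, -1, by omega, by omega, by omega, by omega⟩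
        · exact ⟨-1, 0, 0, by omega, by omega, by omega, by omega⟩
      · rcases lt_trichotomy x 0 with ht|ht|ht
        · exact ⟨1, 0, 0, by omega, by omega, by omega, by omega⟩
        · exact ⟨0, 0, 1, by omega, by omega, by omega, by omega⟩
        · exact ⟨-1, 0, 0, by omega, by omega, by omega, by omega⟩
    · exact ⟨0, -1, 0, by omega, by omega, by omega, by omega⟩
  · -- a = (0,0,1)
    rcases lt_trichotomy z 0 with hp|hp|hp
    · exact ⟨0, 0, 1, by omega, by omega, by omega, by omega⟩
    · rcases hr with ⟨rfl,rfl,rfl⟩|⟨rfl,rfl,rfl⟩|⟨rfl,rfl,rfl⟩|⟨rfl,rfl,rfl⟩|⟨rfl,rfl,rfl⟩|⟨rfl,rfl,rfl⟩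
      · rcases lt_trichotomy y 0 with ht|ht|ht
        · exact ⟨0, 1, 0, by omega, by omega, by omega, by omega⟩
        · exact ⟨-1, 0, 0, by omega, by omega, by omega, by omega⟩
        · exact ⟨0, -1, 0, by omega, by omega, by omega, by omega⟩
      · rcases lt_trichotomy y 0 with ht|ht|ht
        · exact ⟨0, 1, 0, by omega, by omega, by omega, by omega⟩
        · exact ⟨1, 0, 0, by omega, by omega, by omega, by omega⟩
        · exact ⟨0, -1, 0, by omega, by omega, by omega, by omega⟩
      · rcases lt_trichotomy x 0 with ht|ht|ht
        · exact ⟨1, 0, 0, by omega, by omega, by omega, by omega⟩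
        · exact ⟨0, -1, 0, by omega, by omega, by omega, by omega⟩
        · exact ⟨-1, 0, 0, by omega, by omega, by omega, by omega⟩
      · rcases lt_trichotomy x 0 with ht|ht|ht
        · exact ⟨1, 0, 0, by omega, by omega, by omega, by omega⟩
        · exact ⟨0, 1, 0, by omega, by omega, by omega, by omega⟩
        · exact ⟨-1, 0, 0, by omega, by omega, by omega, by omega⟩
      · exfalso; omega
      · exfalso; omega
    · exfalso; omega
  · -- a = (0,0,-1)
    rcases lt_trichotomy z 0 with hp|hp|hp
    · exfalso; omega
    · rcases hr with ⟨rfl,rfl,rfl⟩|⟨rfl,rfl,rfl⟩|⟨rfl,rfl,rfl⟩|⟨rfl,rfl,rfl⟩|⟨rfl,rfl,rfl⟩|⟨rfl,rfl,rfl⟩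
      · rcases lt_trichotomy y 0 with ht|ht|ht
        · exact ⟨0, 1, 0, by omega, by omega, by omega, by omega⟩
        · exact ⟨-1, 0, 0, by omega, by omega, by omega, by omega⟩
        · exact ⟨0, -1, 0, by omega, by omega, by omega, by omega⟩
      · rcases lt_trichotomy y 0 with ht|ht|ht
        · exact ⟨0, 1, 0, by omega, by omega, by omega, by omega⟩
        · exact ⟨1, 0, 0, by omega, by omega, by omega, by omega⟩
        · exact ⟨0, -1, 0, by omega, by omega, by omega, by omega⟩
      · rcases lt_trichotomy x 0 with ht|ht|ht
        · exact ⟨1, 0, 0, by omega, by omega, by omega, by omega⟩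
        · exact ⟨0, -1, 0, by omega, by omega, by omega, by omega⟩
        · exact ⟨-1, 0, 0, by omega, by omega, by omega, by omega⟩
      · rcases lt_trichotomy x 0 with ht|ht|ht
        · exact ⟨1, 0, 0, by omega, by omega, by omega, by omega⟩
        · exact ⟨0, 1, 0, by omega, by omega, by omega, by omega⟩
        · exact ⟨-1, 0, 0, by omega, by omega, by omega, by omega⟩
      · exfalso; omega
      · exfalso; omega
    · exact ⟨0, 0, -1, by omega, by omega, by omega, by omega⟩


lemma keyLemma (s a r : P3) (ha : a ∈ stepSet3) (hr : r ∈ stepSet3)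
    (h2 : 2 ≤ l1 s) (hred : l1 (s - r) < l1 s) (hnred : ¬ l1 (s - a) < l1 s) :
    ∃ b3 : P3, b3 ∈ stepSet3 ∧ l1 (s + b3) + 1 ≤ l1 s ∧ l1 (s - a + b3) ≤ l1 s ∧
      (l1 (s - a + b3) = l1 s → l1 (s - a + b3 - r) < l1 (s - a + b3)) := by
  obtain ⟨x, y, z⟩ := s
  obtain ⟨a1, a2, a3⟩ := a
  obtain ⟨r1, r2, r3⟩ := r
  simp only [stepSet3, Finset.mem_insert, Finset.mem_singleton, Prod.mk.injEq] at ha hr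
  simp only [l1, Prod.mk_sub_mk, Prod.mk_add_mk, Int.abs_eq_natAbs] at h2 hred hnred
  obtain ⟨b1, b2, b3, hmem, hc1, hc2, hc3⟩ :=
    keyLemma' x y z a1 a2 a3 r1 r2 r3 ha hr h2 hred hnred
  refine ⟨(b1, b2, b3), ?_, ?_, ?_, ?_⟩
  · simp only [stepSet3, Finset.mem_insert, Finset.mem_singleton, Prod.mk.injEq]
    tauto
  · simpa only [l1, Prod.mk_add_mk, Int.abs_eq_natAbs] using hc1
  · simpa only [l1, Prod.mk_sub_mk, Prod.mk_add_mk, Int.abs_eq_natAbs] using hc2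
  · intro hq
    have hq' := by simpa only [l1, Prod.mk_sub_mk, Prod.mk_add_mk, Int.abs_eq_natAbs] using hq
    simpa only [l1, Prod.mk_sub_mk, Prod.mk_add_mk, Int.abs_eq_natAbs] using hc3 hq'


/-- Vertices of the transition digraph: words of length `n - 1` over the step alphabet
whose letter-sum has ℓ¹ norm at most `k + 1`. -/
def Vert (n k : ℕ) : Type :=
  {v : Fin (n - 1) → ↥stepSet3 // l1 (∑ i, ((v i : ℤ × ℤ × ℤ))) ≤ (k : ℤ) + 1}

/-- Directed edges of the transition digraph: `w` is obtained from `v` by deleting the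
first letter and appending a new last letter, and the concatenated length-`n` word
(`v` followed by the last letter of `w`) has letter-sum of ℓ¹ norm at most `k`. -/
def Edge (n k : ℕ) (hn : 2 ≤ n) (v w : Vert n k) : Prop :=
  (∀ j : Fin (n - 1), ∀ _ : 1 ≤ j.val,
      w.1 ⟨j.val - 1, by have := j.isLt; omega⟩ = v.1 j) ∧
  l1 ((∑ i, (v.1 i : ℤ × ℤ × ℤ)) + (w.1 ⟨n - 2, by omega⟩ : ℤ × ℤ × ℤ)) ≤ (k : ℤ)

section Digraph

open Classical

variable {n k : ℕ}

lemma mk_edge (hn2 : 2 ≤ n) (v : Vert n k) (b : Stp)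
    (hb : l1 ((∑ i, (v.1 i : P3)) + (b : P3)) ≤ (k : ℤ)) :
    ∃ w : Vert n k, Edge n k hn2 v w ∧ w.1 = push v.1 b := by
  have hm : 1 ≤ n - 1 := by omega
  have hvert : l1 (∑ i, ((push v.1 b) i : P3)) ≤ (k : ℤ) + 1 := by
    rw [sum_push hm]
    have heq : (∑ i, (v.1 i : P3)) - (v.1 ⟨0, hm⟩ : P3) + (b : P3)
        = ((∑ i, (v.1 i : P3)) + (b : P3)) - (v.1 ⟨0, hm⟩ : P3) := by ring
    rw [heq]
    rcases l1_sub_letter _ (v.1 ⟨0, hm⟩).2 ((∑ i, (v.1 i : P3)) + (b : P3)) with h|h <;> omega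
  refine ⟨⟨push v.1 b, hvert⟩, ⟨?_, ?_⟩, rfl⟩
  · intro j hj
    have hjlt := j.isLt
    show push v.1 b _ = v.1 j
    rw [push_lt v.1 b _ (show j.val - 1 + 1 < n - 1 by omega)]
    congr 1
    apply congrArg
    apply Fin.ext
    show j.val - 1 + 1 = j.val
    omega
  · show l1 (_ + ((push v.1 b ⟨n - 2, by omega⟩ : P3))) ≤ (k : ℤ)
    rw [push_last v.1 b _ (show ¬ (n - 2 + 1 < n - 1) by omega)]
    exact hb

open Classical in
noncomputable def dIdx (n k : ℕ) (v : Vert n k) : ℕ :=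
  if h : ∃ t, ∃ ht : t < n - 1,
      l1 ((∑ i, (v.1 i : P3)) - (v.1 ⟨t, ht⟩ : P3)) < l1 (∑ i, (v.1 i : P3))
  then Nat.find h else 0

noncomputable def mu (n k : ℕ) (v : Vert n k) : ℕ :=
  (l1 (∑ i, (v.1 i : P3))).toNat * n + dIdx n k v

lemma dIdx_le (hn2 : 2 ≤ n) (v : Vert n k) : dIdx n k v ≤ n - 2 := by
  unfold dIdx
  split
  · next h =>
    obtain ⟨ht, _⟩ := Nat.find_spec h
    omega
  · omega

lemma mu_lt_aux {p q d d' nn : ℕ} (hpq : p < q) (hd : d' < nn) :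
    p * nn + d' < q * nn + d := by
  have h3 : (p + 1) * nn ≤ q * nn := Nat.mul_le_mul_right _ hpq
  have h2 : (p + 1) * nn = p * nn + nn := by ring
  omega

lemma l1_zero : l1 (0 : P3) = 0 := rfl

lemma descend (hk3 : 3 ≤ k) (hn : k + 1 ≤ n) (v : Vert n k)
    (h2 : 2 ≤ l1 (∑ i, (v.1 i : P3))) :
    ∃ w : Vert n k, Edge n k (by omega) v w ∧ mu n k w < mu n k v := by
  have hn2 : 2 ≤ n := by omega
  have hm : 1 ≤ n - 1 := by omega
  have hvk := v.2
  have hsne : (∑ i, (v.1 i : P3)) ≠ 0 := by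
    intro h
    rw [h, l1_zero] at h2
    omega
  obtain ⟨i0, hi0⟩ := exists_red v.1 hsne
  have hex : ∃ t, ∃ ht : t < n - 1,
      l1 ((∑ i, (v.1 i : P3)) - (v.1 ⟨t, ht⟩ : P3)) < l1 (∑ i, (v.1 i : P3)) :=
    ⟨i0.1, i0.2, hi0⟩
  have hdid : dIdx n k v = Nat.find hex := by
    unfold dIdx
    rw [dif_pos hex]
  obtain ⟨hdlt, hdred⟩ := Nat.find_spec hex
  by_cases hred0 : l1 ((∑ i, (v.1 i : P3)) - (v.1 ⟨0, hm⟩ : P3)) < l1 (∑ i, (v.1 i : P3))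
  · -- first letter reducing : l1 drops by 2
    have hu : l1 ((∑ i, (v.1 i : P3)) - (v.1 ⟨0, hm⟩ : P3)) = l1 (∑ i, (v.1 i : P3)) - 1 := by
      rcases l1_sub_letter _ (v.1 ⟨0, hm⟩).2 (∑ i, (v.1 i : P3)) with h|h <;> omega
    have hune : (∑ i, (v.1 i : P3)) - (v.1 ⟨0, hm⟩ : P3) ≠ 0 := by
      intro h
      rw [h, l1_zero] at hu
      omega
    obtain ⟨b3, hb3mem, hb3⟩ := exists_reduce _ hune
    have hred2 : l1 ((∑ i, (v.1 i : P3)) - (v.1 ⟨0, hm⟩ : P3) + b3)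
        = l1 (∑ i, (v.1 i : P3)) - 2 := by
      rcases l1_add_letter b3 hb3mem ((∑ i, (v.1 i : P3)) - (v.1 ⟨0, hm⟩ : P3)) with h|h <;> omega
    have hcon : l1 ((∑ i, (v.1 i : P3)) + b3) ≤ (k : ℤ) := by
      have heq : (∑ i, (v.1 i : P3)) + b3
          = ((∑ i, (v.1 i : P3)) - (v.1 ⟨0, hm⟩ : P3) + b3) + (v.1 ⟨0, hm⟩ : P3) := by ring
      rw [heq]
      rcases l1_add_letter _ (v.1 ⟨0, hm⟩).2
        ((∑ i, (v.1 i : P3)) - (v.1 ⟨0, hm⟩ : P3) + b3) with h|h <;> omega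
    obtain ⟨w, hedge, hw1⟩ := mk_edge hn2 v ⟨b3, hb3mem⟩ hcon
    have hsw : (∑ i, (w.1 i : P3)) = (∑ i, (v.1 i : P3)) - (v.1 ⟨0, hm⟩ : P3) + b3 := by
      rw [hw1, sum_push hm]
    refine ⟨w, hedge, ?_⟩
    unfold mu
    rw [hsw]
    apply mu_lt_aux
    · omega
    · have := dIdx_le hn2 w
      omega
  · -- first letter not reducing
    have hd1 : 1 ≤ Nat.find hex := by
      by_contra h0
      push_neg at h0
      have hf0 : Nat.find hex = 0 := by omega
      apply hred0
      have hsp := Nat.find_spec hex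
      rw [hf0] at hsp
      obtain ⟨hlt0, hred0'⟩ := hsp
      exact hred0'
    obtain ⟨b3, hb3mem, hc1, hc2, hc3⟩ :=
      keyLemma (∑ i, (v.1 i : P3)) (v.1 ⟨0, hm⟩ : P3) (v.1 ⟨Nat.find hex, hdlt⟩ : P3)
        (v.1 ⟨0, hm⟩).2 (v.1 ⟨Nat.find hex, hdlt⟩).2 h2 hdred hred0
    have hcon : l1 ((∑ i, (v.1 i : P3)) + b3) ≤ (k : ℤ) := by omega
    obtain ⟨w, hedge, hw1⟩ := mk_edge hn2 v ⟨b3, hb3mem⟩ hcon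
    have hsw : (∑ i, (w.1 i : P3)) = (∑ i, (v.1 i : P3)) - (v.1 ⟨0, hm⟩ : P3) + b3 := by
      rw [hw1, sum_push hm]
    refine ⟨w, hedge, ?_⟩
    by_cases heq : l1 ((∑ i, (v.1 i : P3)) - (v.1 ⟨0, hm⟩ : P3) + b3) = l1 (∑ i, (v.1 i : P3))
    · -- stay case : dIdx strictly decreases
      have hwl : w.1 ⟨Nat.find hex - 1, by omega⟩ = v.1 ⟨Nat.find hex, hdlt⟩ := by
        rw [hw1]
        rw [push_lt v.1 _ _ (show Nat.find hex - 1 + 1 < n - 1 by omega)]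
        congr 1
        apply congrArg
        apply Fin.ext
        show Nat.find hex - 1 + 1 = Nat.find hex
        omega
      have hP : ∃ ht : Nat.find hex - 1 < n - 1,
          l1 ((∑ i, (w.1 i : P3)) - (w.1 ⟨Nat.find hex - 1, ht⟩ : P3))
            < l1 (∑ i, (w.1 i : P3)) := by
        refine ⟨by omega, ?_⟩
        rw [hwl, hsw]
        exact hc3 heq
      have hwd : ∃ t, ∃ ht : t < n - 1,
          l1 ((∑ i, (w.1 i : P3)) - (w.1 ⟨t, ht⟩ : P3)) < l1 (∑ i, (w.1 i : P3)) :=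
        ⟨Nat.find hex - 1, hP⟩
      have hwle : dIdx n k w ≤ Nat.find hex - 1 := by
        unfold dIdx
        rw [dif_pos hwd]
        exact Nat.find_le hP
      unfold mu
      rw [hsw, heq, hdid]
      omega
    · -- l1 strictly decreases
      unfold mu
      rw [hsw]
      apply mu_lt_aux
      · omega
      · have := dIdx_le hn2 w
        omega

end Digraph


section Final

variable {n k : ℕ}

lemma reach (hk3 : 3 ≤ k) (hn : k + 1 ≤ n) :
    ∀ (N : ℕ) (v : Vert n k), mu n k v ≤ N →
      ∃ u : Vert n k, Relation.ReflTransGen (Edge n k (by omega)) v u ∧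
        l1 (∑ i, (u.1 i : P3)) ≤ 1 := by
  intro N
  induction N with
  | zero =>
    intro v hv
    by_cases h2 : l1 (∑ i, (v.1 i : P3)) ≤ 1
    · exact ⟨v, Relation.ReflTransGen.refl, h2⟩
    · obtain ⟨w, _, hlt⟩ := descend hk3 hn v (by omega)
      omega
  | succ N ih =>
    intro v hv
    by_cases h2 : l1 (∑ i, (v.1 i : P3)) ≤ 1
    · exact ⟨v, Relation.ReflTransGen.refl, h2⟩
    · obtain ⟨w, he, hlt⟩ := descend hk3 hn v (by omega)
      obtain ⟨u, hp, hu⟩ := ih w (by omega)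
      exact ⟨u, Relation.ReflTransGen.head he hp, hu⟩

end Final


/-- In the transition digraph for three-dimensional lattice paths of length
`n ≥ k + 1 ≥ 4` ending within ℓ¹-distance `k` of the origin: if `n` is odd, every
vertex admits a directed path to a vertex whose letter-sum is the zero vector; if `n`
is even, every vertex admits a directed path to a vertex whose letter-sum has ℓ¹ norm
equal to `1`. -/
theorem lattice_digraph_reaches_origin (n k : ℕ) (hk : 4 ≤ k + 1) (hn : k + 1 ≤ n) :
    (Odd n → ∀ v : Vert n k, ∃ u : Vert n k,
      Relation.ReflTransGen (Edge n k (by omega)) v u ∧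
        (∑ i, (u.1 i : ℤ × ℤ × ℤ)) = 0) ∧
    (Even n → ∀ v : Vert n k, ∃ u : Vert n k,
      Relation.ReflTransGen (Edge n k (by omega)) v u ∧
        l1 (∑ i, (u.1 i : ℤ × ℤ × ℤ)) = 1) := by
  have hk3 : 3 ≤ k := by omega
  constructor
  · intro hodd v
    obtain ⟨u, hpath, hle⟩ := reach hk3 hn (mu n k v) v le_rfl
    refine ⟨u, hpath, ?_⟩
    have hpar := sum_parity u.1
    have hnn := l1_nonneg (∑ i, (u.1 i : P3))
    obtain ⟨t, ht⟩ := hodd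
    have hcast : ((n - 1 : ℕ) : ℤ) = 2 * (t : ℤ) := by
      have h1 : n - 1 = 2 * t := by omega
      rw [h1]
      push_cast
      ring
    rw [hcast] at hpar
    apply l1_eq_zero
    omega
  · intro heven v
    obtain ⟨u, hpath, hle⟩ := reach hk3 hn (mu n k v) v le_rfl
    refine ⟨u, hpath, ?_⟩
    have hpar := sum_parity u.1
    have hnn := l1_nonneg (∑ i, (u.1 i : P3))
    obtain ⟨t, ht⟩ := heven
    have hcast : ((n - 1 : ℕ) : ℤ) = 2 * (t : ℤ) - 1 := by
      have h1 : n - 1 = 2 * t - 1 := by omega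
      rw [h1]
      have h2 : 1 ≤ 2 * t := by omega
      push_cast [h2]
      ring
    rw [hcast] at hpar
    omega
end

section
/- For all integers k, s, t with 1 ≤ s < t ≤ k, there exists a universal cycle for the set of binary words w : Fin k → Fin 2 whose weight (number of positions carrying the letter 1) lies between s and t inclusive. -/
/-!
The binary words of length `k` with weight in `[s, t]` are the edges of a de Bruijn-type multigraph
on the words of length `k - 1`, each word going from its prefix to its suffix; an Eulerian circuit,
read off by first letters, is a universal cycle. The graph is balanced, since rotating a word keeps
its weight and turns its suffix into its prefix. In a balanced graph every edge lies on a closed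
trail, so reachability is symmetric and it suffices to link any two edges. The step
`a :: L → L ++ [b]` links consecutive words. An adjacent transposition `a b Q ↦ b a Q` is the detour
`a b Q → b Q b → Q b a` followed by a rotation; the middle word is one heavier or one lighter than
the others, so because `s < t` the detour stays in the band in one of the two directions. Hence
words of equal weight are linked, and `0 :: L → L ++ [1]` climbs from one weight to the next.
-/

theorem card_filter_eq_count_ofFn {α : Type*} [DecidableEq α] {k : ℕ} (w : Fin k → α) (a : α) :
    (Finset.univ.filter fun i => w i = a).card = (List.ofFn w).count a := by
  rw [List.ofFn_eq_map, List.count, List.countP_map, Fin.univ_def, List.countP_eq_length_filter]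
  rfl

theorem List.ofFn_comp_finRotate {α : Type*} {k : ℕ} (w : Fin k → α) :
    List.ofFn (w ∘ finRotate k) = (List.ofFn w).rotate 1 := by
  cases k with
  | zero => rfl
  | succ k =>
    refine List.ext_getElem (by simp) fun i h₁ h₂ => ?_
    simp only [List.getElem_ofFn, List.getElem_rotate, List.length_ofFn, Function.comp_apply,
      finRotate_apply]
    congr 1
    ext
    simp [Fin.val_add]

theorem List.exists_ofFn_eq {α : Type*} {k : ℕ} (l : List α) (h : l.length = k) :
    ∃ w : Fin k → α, List.ofFn w = l := by
  subst h
  exact ⟨fun i => l[i], List.ofFn_getElem⟩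

theorem List.count_zero_add_count_one (l : List (Fin 2)) : l.count 0 + l.count 1 = l.length := by
  induction l with
  | nil => rfl
  | cons a l ih => fin_cases a <;> simp <;> omega

theorem List.perm_of_count_one_eq {l l' : List (Fin 2)} (hlen : l.length = l'.length)
    (hcount : l.count 1 = l'.count 1) : l.Perm l' := by
  refine List.perm_iff_count.mpr fun a => ?_
  have := List.count_zero_add_count_one l
  have := List.count_zero_add_count_one l'
  fin_cases a <;> simp <;> omega

theorem List.zero_mem_of_count_one_lt_length {l : List (Fin 2)} (h : l.count 1 < l.length) :
    (0 : Fin 2) ∈ l := by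
  by_contra h0
  have := List.count_zero_add_count_one l
  rw [List.count_eq_zero_of_not_mem h0] at this
  omega

theorem List.Nodup.count_map_eq_card_filter {ε V : Type*} [DecidableEq ε] [DecidableEq V]
    {C : List ε} (h : C.Nodup) (f : ε → V) (v : V) :
    (C.map f).count v = (C.toFinset.filter (f · = v)).card := by
  rw [List.count, List.countP_map, List.countP_eq_length_filter,
    ← List.toFinset_card_of_nodup (h.filter _), List.toFinset_filter]
  simp

theorem Cycle.Chain.getElem_mod {α : Type*} {R : α → α → Prop} {C : List α}
    (hC : Cycle.Chain R (C : Cycle α)) (j : ℕ) (hj : j < C.length) :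
    R C[j] (C[(j + 1) % C.length]'(Nat.mod_lt _ (by omega))) := by
  have hne : C ≠ [] := List.ne_nil_of_length_pos (by omega)
  have hchain := List.isChain_iff_getElem.mp ((Cycle.chain_ne_nil R hne).mp hC)
  rcases Nat.lt_or_ge (j + 1) C.length with hlt | hge
  · have := hchain (j + 1) (by simpa using hlt)
    simp only [List.getElem_cons_succ] at this
    simpa [Nat.mod_eq_of_lt hlt] using this
  · have hjL : j + 1 = C.length := by omega
    have := hchain 0 (by simpa using Nat.pos_of_ne_zero (by omega))
    simp only [List.getElem_cons_zero, List.getElem_cons_succ, List.getLast_eq_getElem] at this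
    simpa [hjL, show C.length - 1 = j by omega] using this

theorem List.Nodup.exists_bijOn_zmod {α : Type*} {R : α → α → Prop} {C : List α}
    (hnd : C.Nodup) (hne : C ≠ []) (hC : Cycle.Chain R (C : Cycle α)) :
    ∃ W : ZMod C.length → α, Set.BijOn W Set.univ {x | x ∈ C} ∧ ∀ i, R (W i) (W (i + 1)) := by
  have : NeZero C.length := ⟨by simpa using hne⟩
  refine ⟨fun i => C[i.val]'(ZMod.val_lt i), ⟨fun i _ => List.getElem_mem _, ?_, ?_⟩, ?_⟩
  · intro i _ j _ hij
    exact ZMod.val_injective _ ((hnd.getElem_inj_iff).mp hij)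
  · intro x hx
    obtain ⟨i, hi, rfl⟩ := List.mem_iff_getElem.mp hx
    exact ⟨i, Set.mem_univ _, by simp [ZMod.val_natCast_of_lt hi]⟩
  · intro i
    have hval : (i + 1).val = (i.val + 1) % C.length := by
      rw [ZMod.val_add, ZMod.val_one_eq_one_mod, Nat.add_mod_mod]
    simpa only [hval] using hC.getElem_mod i.val (ZMod.val_lt i)

namespace Multidigraph

variable {ε V : Type*} (src dst : ε → V)

def Reach (E : Finset ε) : V → V → Prop :=
  Relation.ReflTransGen fun x y => ∃ e ∈ E, src e = x ∧ dst e = y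

def Balanced [DecidableEq V] (E : Finset ε) : Prop :=
  ∀ v, (E.filter (src · = v)).card = (E.filter (dst · = v)).card

abbrev Follows (a b : ε) : Prop := dst a = src b

structure IsTrail (E : Finset ε) (C : List ε) : Prop where
  nodup : C.Nodup
  subset : ∀ e ∈ C, e ∈ E
  chain : C.IsChain (Follows src dst)

variable {src dst}

theorem map_src_append_dst_getLast {a : ε} {l : List ε}
    (h : (a :: l).IsChain (Follows src dst)) :
    (a :: l).map src ++ [dst ((a :: l).getLast (List.cons_ne_nil a l))]
      = src a :: (a :: l).map dst := by
  induction l generalizing a with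
  | nil => rfl
  | cons b l ih =>
    rw [List.isChain_cons_cons] at h
    have ih := ih h.2
    simp only [List.map_cons, List.cons_append] at ih ⊢
    rw [List.getLast_cons (List.cons_ne_nil b l), ih, h.1]

theorem reach_dst_getLast {E : Finset ε} {a : ε} {l : List ε}
    (h : (a :: l).IsChain (Follows src dst)) (hE : ∀ e ∈ l, e ∈ E) :
    Reach src dst E (dst a) (dst ((a :: l).getLast (List.cons_ne_nil a l))) := by
  induction l generalizing a with
  | nil => exact .refl
  | cons b l ih =>
    rw [List.isChain_cons_cons] at h
    rw [List.getLast_cons (List.cons_ne_nil b l)]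
    exact .head ⟨b, hE b (by simp), h.1.symm, rfl⟩ (ih h.2 fun e he => hE e (by simp [he]))

namespace IsTrail

variable {E : Finset ε} {C : List ε}

theorem singleton {e : ε} (he : e ∈ E) : IsTrail src dst E [e] :=
  ⟨List.nodup_singleton e, by simpa using he, .singleton e⟩

theorem length_le (hC : IsTrail src dst E C) : C.length ≤ E.card := by
  classical
  rw [← List.toFinset_card_of_nodup hC.nodup]
  exact Finset.card_le_card fun e he => hC.subset e (List.mem_toFinset.mp he)

theorem concat (hC : IsTrail src dst E C) {f : ε} (hfE : f ∈ E) (hfC : f ∉ C)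
    (hf : ∀ g ∈ C.getLast?, dst g = src f) : IsTrail src dst E (C ++ [f]) where
  nodup := hC.nodup.append (List.nodup_singleton f) (by simpa using hfC)
  subset e he := by
    rcases List.mem_append.mp he with he | he
    · exact hC.subset e he
    · rwa [List.mem_singleton.mp he]
  chain := hC.chain.append (.singleton f) (by simpa using hf)

-- A trail ending away from its start enters its last vertex once more than it leaves it; by
-- balance some edge leaving that vertex is then unused.
theorem cycleChain_of_saturated [DecidableEq ε] [DecidableEq V] (hE : Balanced src dst E)
    (hC : IsTrail src dst E C) (hne : C ≠ [])
    (hsat : ∀ f ∈ E, src f = dst (C.getLast hne) → f ∈ C) :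
    Cycle.Chain (Follows src dst) (C : Cycle ε) := by
  obtain ⟨a, l, rfl⟩ := List.exists_cons_of_ne_nil hne
  set w := dst ((a :: l).getLast hne)
  have hclosed : w = src a := by
    by_contra hw
    have hcount := congrArg (List.count w) (map_src_append_dst_getLast hC.chain)
    rw [List.count_append, List.count_singleton_self, List.count_cons_of_ne (Ne.symm hw),
      hC.nodup.count_map_eq_card_filter, hC.nodup.count_map_eq_card_filter] at hcount
    have hsub : (a :: l).toFinset ⊆ E := fun e he => hC.subset e (List.mem_toFinset.mp he)
    have hin := Finset.card_le_card (Finset.filter_subset_filter (dst · = w) hsub)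
    have hout : (E.filter (src · = w)).card ≤ ((a :: l).toFinset.filter (src · = w)).card :=
      Finset.card_le_card fun f hf => by
        rw [Finset.mem_filter] at hf ⊢
        exact ⟨List.mem_toFinset.mpr (hsat f hf.1 hf.2), hf.2⟩
    have := hE w
    omega
  rw [Cycle.chain_ne_nil _ hne]
  exact hC.chain.cons_of_ne_nil hne hclosed

theorem exists_closed_extension [DecidableEq ε] [DecidableEq V] (hE : Balanced src dst E)
    (hC : IsTrail src dst E C) (hne : C ≠ []) :
    ∃ D, IsTrail src dst E D ∧ C <+: D ∧
      Cycle.Chain (Follows src dst) (D : Cycle ε) := by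
  induction hn : E.card - C.length using Nat.strong_induction_on generalizing C with
  | _ n ih =>
  by_cases hsat : ∀ f ∈ E, src f = dst (C.getLast hne) → f ∈ C
  · exact ⟨C, hC, List.prefix_rfl, hC.cycleChain_of_saturated hE hne hsat⟩
  push Not at hsat
  obtain ⟨f, hfE, hf, hfC⟩ := hsat
  have hCf := hC.concat hfE hfC (by simp [List.getLast?_eq_some_getLast hne, hf])
  have hlen := hCf.length_le
  simp only [List.length_append, List.length_singleton] at hlen
  obtain ⟨D, hD, hpre, hcyc⟩ := ih (E.card - (C ++ [f]).length)
    (by simp only [List.length_append, List.length_singleton]; omega) hCf (by simp) rfl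
  exact ⟨D, hD, (List.prefix_append C [f]).trans hpre, hcyc⟩

theorem exists_rotation_getLast (hC : IsTrail src dst E C)
    (hcyc : Cycle.Chain (Follows src dst) (C : Cycle ε)) {g : ε} (hg : g ∈ C) :
    ∃ D, IsTrail src dst E D ∧ D.Perm C ∧ D.getLast? = some g := by
  obtain ⟨A, B, rfl⟩ := List.append_of_mem hg
  have hrot : (A ++ [g]) ++ B ~r B ++ (A ++ [g]) := List.isRotated_append
  have hperm : (B ++ (A ++ [g])).Perm (A ++ g :: B) := by simpa using hrot.perm.symm
  have hDcyc : Cycle.Chain (Follows src dst) (B ++ (A ++ [g]) : List ε) := by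
    rwa [Cycle.coe_eq_coe.2 (by simpa using hrot.symm : B ++ (A ++ [g]) ~r A ++ g :: B)]
  have hchain := ((Cycle.chain_ne_nil _ (by simp)).1 hDcyc).tail
  exact ⟨_, ⟨hperm.nodup_iff.2 hC.nodup, fun e he => hC.subset e (hperm.mem_iff.1 he), hchain⟩,
    hperm, by simp⟩

end IsTrail

theorem reach_dst_src [DecidableEq ε] [DecidableEq V] {E : Finset ε} (hE : Balanced src dst E)
    {e : ε} (he : e ∈ E) : Reach src dst E (dst e) (src e) := by
  obtain ⟨D, hD, ⟨l, rfl⟩, hcyc⟩ :=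
    (IsTrail.singleton he).exists_closed_extension hE (List.cons_ne_nil e [])
  rw [List.singleton_append, Cycle.chain_ne_nil _ (List.cons_ne_nil e l),
    List.isChain_cons_cons] at hcyc
  rw [← hcyc.1]
  exact reach_dst_getLast hD.chain fun x hx => hD.subset x (List.mem_cons_of_mem e hx)

theorem reach_symm [DecidableEq ε] [DecidableEq V] {E : Finset ε} (hE : Balanced src dst E)
    {u v : V} (h : Reach src dst E u v) : Reach src dst E v u := by
  induction h with
  | refl => exact .refl
  | tail _ hstep ih =>
    obtain ⟨e, he, rfl, rfl⟩ := hstep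
    exact (reach_dst_src hE he).trans ih

theorem exists_dst_eq_src_of_reach {E : Finset ε} {C : List ε} {g₀ e : ε} (hg₀ : g₀ ∈ C)
    (heE : e ∈ E) (heC : e ∉ C) (h : Reach src dst E (dst g₀) (src e)) :
    ∃ g ∈ C, ∃ f ∈ E, f ∉ C ∧ dst g = src f := by
  by_contra hno
  push Not at hno
  have key : ∀ x, Reach src dst E (dst g₀) x → ∃ g ∈ C, dst g = x := by
    intro x hx
    induction hx with
    | refl => exact ⟨g₀, hg₀, rfl⟩
    | tail _ hstep ih =>
      obtain ⟨g, hg, rfl⟩ := ih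
      obtain ⟨f, hfE, hfsrc, rfl⟩ := hstep
      by_cases hfC : f ∈ C
      · exact ⟨f, hfC, rfl⟩
      · exact absurd hfsrc.symm (hno g hg f hfE hfC)
  obtain ⟨g, hg, hge⟩ := key _ h
  exact hno g hg e heE heC hge

-- A closed trail missing some edge is rotated to end where an unused edge starts, then lengthened.
theorem IsTrail.exists_eulerian_of_cycleChain [DecidableEq ε] [DecidableEq V] {E : Finset ε}
    (hE : Balanced src dst E) (hconn : ∀ e ∈ E, ∀ e' ∈ E, Reach src dst E (src e) (src e'))
    {C : List ε} (hC : IsTrail src dst E C) (hCne : C ≠ [])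
    (hcyc : Cycle.Chain (Follows src dst) (C : Cycle ε)) :
    ∃ C : List ε, C.Nodup ∧ C.toFinset = E ∧ Cycle.Chain (Follows src dst) (C : Cycle ε) := by
  induction hn : E.card - C.length using Nat.strong_induction_on generalizing C with
  | _ n ih =>
  have hsub : C.toFinset ⊆ E := fun e he => hC.subset e (List.mem_toFinset.mp he)
  by_cases hcov : E ⊆ C.toFinset
  · exact ⟨C, hC.nodup, hsub.antisymm hcov, hcyc⟩
  obtain ⟨e, heE, heC⟩ := Finset.not_subset.mp hcov
  obtain ⟨g₀, hg₀⟩ := List.exists_mem_of_ne_nil C hCne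
  obtain ⟨g, hg, f, hfE, hfC, hgf⟩ := exists_dst_eq_src_of_reach hg₀ heE
    (fun h => heC (List.mem_toFinset.mpr h))
    ((reach_dst_src hE (hC.subset g₀ hg₀)).trans (hconn g₀ (hC.subset g₀ hg₀) e heE))
  obtain ⟨D, hD, hperm, hlast⟩ := hC.exists_rotation_getLast hcyc hg
  have hDf := hD.concat hfE (by rwa [hperm.mem_iff]) (by simp [hlast, hgf])
  obtain ⟨D', hD', hpre, hcyc'⟩ := hDf.exists_closed_extension hE (by simp)
  have hlen := hpre.length_le
  have hbound := hD'.length_le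
  rw [List.length_append, List.length_singleton, hperm.length_eq] at hlen
  exact ih _ (by omega) hD' (List.ne_nil_of_length_pos (by omega)) hcyc' rfl

theorem exists_eulerian_circuit [DecidableEq ε] [DecidableEq V] {E : Finset ε}
    (hE : Balanced src dst E) (hconn : ∀ e ∈ E, ∀ e' ∈ E, Reach src dst E (src e) (src e'))
    (hne : E.Nonempty) :
    ∃ C : List ε, C.Nodup ∧ C.toFinset = E ∧ Cycle.Chain (Follows src dst) (C : Cycle ε) := by
  obtain ⟨e₀, he₀⟩ := hne
  obtain ⟨C, hC, hpre, hcyc⟩ :=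
    (IsTrail.singleton he₀).exists_closed_extension hE (List.cons_ne_nil e₀ [])
  exact hC.exists_eulerian_of_cycleChain hE hconn
    (List.ne_nil_of_mem (hpre.subset (List.mem_singleton_self e₀))) hcyc

theorem exists_eulerian_enumeration [DecidableEq ε] [DecidableEq V] {E : Finset ε}
    (hE : Balanced src dst E) (hconn : ∀ e ∈ E, ∀ e' ∈ E, Reach src dst E (src e) (src e'))
    (hne : E.Nonempty) :
    ∃ W : ZMod E.card → ε, Set.BijOn W Set.univ E ∧ ∀ i, dst (W i) = src (W (i + 1)) := by
  obtain ⟨C, hnd, rfl, hcyc⟩ := exists_eulerian_circuit hE hconn hne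
  have hCne : C ≠ [] := by simpa using hne.ne_empty
  rw [List.toFinset_card_of_nodup hnd, List.coe_toFinset]
  exact hnd.exists_bijOn_zmod hCne hcyc

end Multidigraph

def wordInit {α : Type*} {k : ℕ} (w : Fin k → α) : List α := (List.ofFn w).dropLast

def wordTail {α : Type*} {k : ℕ} (w : Fin k → α) : List α := (List.ofFn w).tail

theorem apply_succ_eq_of_wordTail_eq {α : Type*} {k : ℕ} {w w' : Fin k → α}
    (h : wordTail w = wordInit w') (j : ℕ) (hj : j + 1 < k) :
    w ⟨j + 1, hj⟩ = w' ⟨j, by omega⟩ := by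
  have := List.getElem_of_eq h (i := j) (by simp [wordTail]; omega)
  simpa [wordTail, wordInit] using this

theorem hasUCycle_of_bijOn_s17 {α : Type*} {k : ℕ} (hk : 0 < k) {S : Finset (Fin k → α)}
    (W : ZMod S.card → Fin k → α) (hW : Set.BijOn W Set.univ S)
    (hW' : ∀ i, wordTail (W i) = wordInit (W (i + 1))) : HasUCycle S := by
  have hshift : ∀ d (hd : d < k) i, W i ⟨d, hd⟩ = W (i + d) ⟨0, hk⟩ := by
    intro d
    induction d with
    | zero => simp
    | succ d ih =>
      intro hd i
      rw [apply_succ_eq_of_wordTail_eq (hW' i) d hd, ih (by omega), add_assoc, Nat.cast_succ,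
        add_comm (1 : ZMod _)]
  refine ⟨fun i => W i ⟨0, hk⟩, ?_⟩
  convert hW using 1
  funext i j
  exact (hshift j j.isLt i).symm

section WeightBand

open Multidigraph

def IsBandWord (k s t : ℕ) (l : List (Fin 2)) : Prop :=
  l.length = k ∧ s ≤ l.count 1 ∧ l.count 1 ≤ t

noncomputable def bandWords (k s t : ℕ) : Finset (Fin k → Fin 2) :=
  wordsOf fun w : Fin k → Fin 2 =>
    s ≤ (Finset.univ.filter fun i => w i = 1).card ∧
      (Finset.univ.filter fun i => w i = 1).card ≤ t

variable {k s t : ℕ}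

theorem mem_bandWords {w : Fin k → Fin 2} :
    w ∈ bandWords k s t ↔ IsBandWord k s t (List.ofFn w) := by
  simp [bandWords, wordsOf, IsBandWord, card_filter_eq_count_ofFn]

theorem IsBandWord.perm {l l' : List (Fin 2)} (h : IsBandWord k s t l) (hp : l.Perm l') :
    IsBandWord k s t l' := by
  rwa [IsBandWord, ← hp.length_eq, ← hp.count_eq]

theorem bandWords_balanced : Balanced wordInit wordTail (bandWords k s t) := by
  intro v
  symm
  refine Finset.card_equiv ((finRotate k).symm.arrowCongr (Equiv.refl _)) fun w => ?_
  change _ ↔ w ∘ finRotate k ∈ _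
  have hrot : List.ofFn (w ∘ finRotate k) = (List.ofFn w).rotate 1 := List.ofFn_comp_finRotate w
  have hinit : wordInit (w ∘ finRotate k) = wordTail w := by
    rw [wordInit, wordTail, hrot]
    cases List.ofFn w with
    | nil => rfl
    | cons a l => simp
  simp only [Finset.mem_filter, mem_bandWords, hinit, hrot]
  exact and_congr_left fun _ => ⟨fun h => h.perm (List.rotate_perm _ 1).symm,
    fun h => h.perm (List.rotate_perm _ 1)⟩

def BandLinked (k s t : ℕ) (l l' : List (Fin 2)) : Prop :=
  Reach wordInit wordTail (bandWords k s t) l.dropLast l'.dropLast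

theorem BandLinked.refl (l : List (Fin 2)) : BandLinked k s t l l :=
  Relation.ReflTransGen.refl

theorem BandLinked.symm {l l' : List (Fin 2)} (h : BandLinked k s t l l') :
    BandLinked k s t l' l :=
  reach_symm bandWords_balanced h

theorem BandLinked.trans {l l' l'' : List (Fin 2)} (h : BandLinked k s t l l')
    (h' : BandLinked k s t l' l'') :
    BandLinked k s t l l'' :=
  Relation.ReflTransGen.trans h h'

theorem linked_cons_append {a : Fin 2} {L : List (Fin 2)} (h : IsBandWord k s t (a :: L))
    (b : Fin 2) : BandLinked k s t (a :: L) (L ++ [b]) := by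
  obtain ⟨w, hw⟩ := List.exists_ofFn_eq (a :: L) h.1
  refine .single ⟨w, mem_bandWords.mpr (hw ▸ h), by rw [wordInit, hw], ?_⟩
  rw [wordTail, hw, List.tail_cons, List.dropLast_concat]

theorem linked_append_comm (A : List (Fin 2)) {B : List (Fin 2)}
    (h : IsBandWord k s t (A ++ B)) : BandLinked k s t (A ++ B) (B ++ A) := by
  induction A generalizing B with
  | nil => simpa using BandLinked.refl B
  | cons a A ih =>
    have hrot : (A ++ (B ++ [a])).Perm (a :: (A ++ B)) := by
      rw [← List.append_assoc]
      exact List.perm_append_singleton a _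
    have h₂ := ih (h.perm hrot.symm)
    rw [← List.append_assoc, List.append_assoc B] at h₂
    exact (linked_cons_append h a).trans h₂

theorem linked_swap {a b : Fin 2} {Q : List (Fin 2)} (h : IsBandWord k s t (a :: b :: Q))
    (hb : IsBandWord k s t (b :: Q ++ [b])) : BandLinked k s t (a :: b :: Q) (b :: a :: Q) := by
  have hrot : (a :: b :: Q).Perm (Q ++ [b, a]) := by
    rw [List.perm_iff_count]
    intro x
    simp only [List.count_cons, List.count_append, List.count_nil]
    omega
  have h₃ := linked_append_comm Q (h.perm hrot)
  rw [show Q ++ [b, a] = Q ++ [b] ++ [a] by simp] at h₃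
  exact (linked_cons_append h b).trans ((linked_cons_append hb a).trans h₃)

theorem linked_swap_of_lt (hst : s < t) {a b : Fin 2} {Q : List (Fin 2)}
    (h : IsBandWord k s t (a :: b :: Q)) : BandLinked k s t (a :: b :: Q) (b :: a :: Q) := by
  by_cases hb : IsBandWord k s t (b :: Q ++ [b])
  · exact linked_swap h hb
  have ha : IsBandWord k s t (a :: Q ++ [a]) := by
    simp only [IsBandWord, List.count_cons, List.count_append, List.length_cons,
      List.length_append] at h hb ⊢
    fin_cases a <;> fin_cases b <;> simp at h hb ⊢ <;> omega
  exact (linked_swap (h.perm (List.Perm.swap b a Q)) ha).symm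

theorem linked_of_perm (hst : s < t) {l l' : List (Fin 2)} (hp : l.Perm l')
    (h : IsBandWord k s t l) : BandLinked k s t l l' := by
  -- A common suffix `R` lets the `cons` case rotate the head letter out of the way.
  suffices ∀ R, IsBandWord k s t (l ++ R) → BandLinked k s t (l ++ R) (l' ++ R) by
    simpa using this [] (by simpa using h)
  clear h
  induction hp with
  | nil => exact fun R _ => BandLinked.refl R
  | cons x hp ih =>
    intro R hR
    have h₂ := ih (R ++ [x]) (hR.perm (by
      rw [← List.append_assoc]
      exact (List.perm_append_singleton x _).symm))
    have hR' : IsBandWord k s t (x :: (_ ++ R)) := hR.perm ((hp.append_right R).cons x)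
    rw [← List.append_assoc, ← List.append_assoc] at h₂
    exact (linked_cons_append hR x).trans (h₂.trans (linked_cons_append hR' x).symm)
  | swap x y l => exact fun R hR => linked_swap_of_lt hst hR
  | trans hp _ ih₁ ih₂ =>
    exact fun R hR => (ih₁ R hR).trans (ih₂ R (hR.perm (hp.append_right R)))

theorem linked_of_count_le (hst : s < t) {l l' : List (Fin 2)} (h : IsBandWord k s t l)
    (h' : IsBandWord k s t l') (hle : l.count 1 ≤ l'.count 1) : BandLinked k s t l l' := by
  induction hn : l'.count 1 - l.count 1 generalizing l with
  | zero => exact linked_of_perm hst (List.perm_of_count_one_eq (h.1.trans h'.1.symm) (by omega)) h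
  | succ n ih =>
    have h0 : (0 : Fin 2) ∈ l := List.zero_mem_of_count_one_lt_length (by
      have := List.count_le_length (a := (1 : Fin 2)) (l := l')
      rw [h.1, ← h'.1]
      omega)
    have hp := List.perm_cons_erase h0
    have hL := h.perm hp
    have hcount : (l.erase 0 ++ [1]).count 1 = l.count 1 + 1 := by
      rw [List.count_append, List.count_singleton_self, hp.count_eq,
        List.count_cons_of_ne (by decide)]
    have hs := h.2.1
    have ht := h'.2.2
    have hL1 : IsBandWord k s t (l.erase 0 ++ [1]) := ⟨by simpa using hL.1, by omega, by omega⟩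
    exact (linked_of_perm hst hp h).trans
      ((linked_cons_append hL 1).trans (ih hL1 (by omega) (by omega)))

theorem bandWords_reach (hst : s < t) {e e' : Fin k → Fin 2} (he : e ∈ bandWords k s t)
    (he' : e' ∈ bandWords k s t) :
    Reach wordInit wordTail (bandWords k s t) (wordInit e) (wordInit e') := by
  rw [mem_bandWords] at he he'
  rcases le_total ((List.ofFn e).count 1) ((List.ofFn e').count 1) with hle | hle
  · exact linked_of_count_le hst he he' hle
  · exact (linked_of_count_le hst he' he hle).symm

theorem bandWords_nonempty (hsk : s ≤ k) (hst : s ≤ t) : (bandWords k s t).Nonempty := by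
  obtain ⟨w, hw⟩ := List.exists_ofFn_eq (k := k)
    (List.replicate s (1 : Fin 2) ++ List.replicate (k - s) 0) (by simp; omega)
  refine ⟨w, mem_bandWords.mpr ?_⟩
  simp [hw, IsBandWord, List.count_replicate]
  omega

end WeightBand

theorem ucycle_weight_range_binary_words_general (k s t : ℕ) (hst : s < t)
    (htk : t ≤ k) :
    HasUCycle (wordsOf (fun w : Fin k → Fin 2 =>
      s ≤ (Finset.univ.filter fun i => w i = 1).card ∧
        (Finset.univ.filter fun i => w i = 1).card ≤ t)) := by
  obtain ⟨W, hW, hWstep⟩ := Multidigraph.exists_eulerian_enumeration bandWords_balanced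
    (fun _ he _ he' => bandWords_reach hst he he') (bandWords_nonempty (k := k) (by omega) hst.le)
  exact hasUCycle_of_bijOn_s17 (by omega) W hW hWstep

/-- For `1 ≤ s < t ≤ k`, U-cycles of binary words of length `k` whose weight (number
of ones) lies between `s` and `t` inclusive exist. -/
theorem ucycle_weight_range_binary_words (k s t : ℕ) (hs : 1 ≤ s) (hst : s < t)
    (htk : t ≤ k) :
    HasUCycle (wordsOf (fun w : Fin k → Fin 2 =>
      s ≤ (Finset.univ.filter fun i => w i = 1).card ∧
        (Finset.univ.filter fun i => w i = 1).card ≤ t)) :=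
  ucycle_weight_range_binary_words_general k s t hst htk
end
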